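/- Fix a smooth nondecreasing cutoff Ψ : ℝ → [0,1] with Ψ ≡ 0 on (−∞,−1], Ψ ≡ 1 on [1,∞), and Ψ − 1/2 odd. Given c > 0 there exists m₀ > 0 such that for every integer m > m₀ and all ζ, ξ ∈ [−c, c], the boundary of the pre-initial surface, namely the set Σ̌[m,ζ,ξ] ∩ {p ∈ ℝ³ : ‖p‖ = 1}, is a connected subset of ℝ³. -/

import Mathlib

noncomputable section

/-- The inverse hyperbolic cosine: `arcosh x = log (x + √(x² − 1))` for `x ≥ 1`. -/
def arcosh (x : ℝ) : ℝ := Real.log (x + Real.sqrt (x ^ 2 - 1))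

/-- The cutoff `ψ_{a,b} := Ψ ∘ L_{a,b}`, where `L_{a,b}` is the affine function with
`L_{a,b}(a) = −3` and `L_{a,b}(b) = 3`. -/
def cutoffAB (Ψ : ℝ → ℝ) (a b x : ℝ) : ℝ := Ψ (-3 + 6 * (x - a) / (b - a))

/-- The waist radius `τ = (1/(20m)) e^{ζ − m/2}`. -/
def tauOf (m : ℕ) (ζ : ℝ) : ℝ := 1 / (20 * m) * Real.exp (ζ - (m : ℝ) / 2)

/-- The catenoidal profile `φ_cat(r) = τ arcosh (r/τ)`. -/
def phiCat (τ r : ℝ) : ℝ := τ * arcosh (r / τ)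

/-- The truncation parameter `a = τ⁻¹ φ_cat (1/(20m))`. -/
def aOf (m : ℕ) (ζ : ℝ) : ℝ := (tauOf m ζ)⁻¹ * phiCat (tauOf m ζ) (1 / (20 * m))

/-- The waist height `z₀ = τ ξ + τ a`. -/
def z0Of (m : ℕ) (ζ ξ : ℝ) : ℝ := tauOf m ζ * ξ + tauOf m ζ * aOf m ζ

/-- `φ₀ = (z₀ − φ_cat(r)) ψ_{1/(10m),1/(20m)}(r)`, with `r = √(u² + v²)`. -/
def phi0 (Ψ : ℝ → ℝ) (m : ℕ) (ζ ξ : ℝ) (u v : ℝ) : ℝ :=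
  (z0Of m ζ ξ - phiCat (tauOf m ζ) (Real.sqrt (u ^ 2 + v ^ 2))) *
    cutoffAB Ψ (1 / (10 * m)) (1 / (20 * m)) (Real.sqrt (u ^ 2 + v ^ 2))

/-- `φ₁ = z₀ + φ_cat(r) ψ_{1/(10m),1/(20m)}(r) + τ a ψ_{1/(20m),1/(10m)}(r)`,
with `r = √(u² + v²)`. -/
def phi1 (Ψ : ℝ → ℝ) (m : ℕ) (ζ ξ : ℝ) (u v : ℝ) : ℝ :=
  z0Of m ζ ξ +
    phiCat (tauOf m ζ) (Real.sqrt (u ^ 2 + v ^ 2)) *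
      cutoffAB Ψ (1 / (10 * m)) (1 / (20 * m)) (Real.sqrt (u ^ 2 + v ^ 2)) +
    tauOf m ζ * aOf m ζ *
      cutoffAB Ψ (1 / (20 * m)) (1 / (10 * m)) (Real.sqrt (u ^ 2 + v ^ 2))

/-- The wedge `W[m] = {(x,y) ∈ B² : x ≥ 0, |y| ≤ x tan (π/(2m))}`. -/
def wedge (m : ℕ) : Set (ℝ × ℝ) :=
  {q | q.1 ^ 2 + q.2 ^ 2 ≤ 1 ∧ 0 ≤ q.1 ∧ |q.2| ≤ q.1 * Real.tan (Real.pi / (2 * m))}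

/-- `Γ₀ = B³ ∩ {(x, y, φ₀(x−1, y)) : (x,y) ∈ W[m], (x−1)² + y² ≥ τ²}`. -/
def Gamma0 (Ψ : ℝ → ℝ) (m : ℕ) (ζ ξ : ℝ) : Set (EuclideanSpace ℝ (Fin 3)) :=
  {p | ‖p‖ ≤ 1 ∧ ∃ x y : ℝ, (x, y) ∈ wedge m ∧ tauOf m ζ ^ 2 ≤ (x - 1) ^ 2 + y ^ 2 ∧
    p = ![x, y, phi0 Ψ m ζ ξ (x - 1) y]}

/-- `Γ₁ = B³ ∩ {(x, y, φ₁(x−1, y)) : (x,y) ∈ W[m], (x−1)² + y² ≥ τ²}`. -/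
def Gamma1 (Ψ : ℝ → ℝ) (m : ℕ) (ζ ξ : ℝ) : Set (EuclideanSpace ℝ (Fin 3)) :=
  {p | ‖p‖ ≤ 1 ∧ ∃ x y : ℝ, (x, y) ∈ wedge m ∧ tauOf m ζ ^ 2 ≤ (x - 1) ^ 2 + y ^ 2 ∧
    p = ![x, y, phi1 Ψ m ζ ξ (x - 1) y]}

/-- `Γ₋₁ = B³ ∩ (W[m] × {−z₀ − τa})`. -/
def GammaNeg (m : ℕ) (ζ ξ : ℝ) : Set (EuclideanSpace ℝ (Fin 3)) :=
  {p | ‖p‖ ≤ 1 ∧ ∃ x y : ℝ, (x, y) ∈ wedge m ∧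
    p = ![x, y, -z0Of m ζ ξ - tauOf m ζ * aOf m ζ]}

/-- Reflection through the plane `{y = 0}`. -/
def reflY : Function.End (EuclideanSpace ℝ (Fin 3)) :=
  fun p => WithLp.toLp 2 ![p 0, -p 1, p 2]

/-- Reflection of `ℝ³` through the horizontal line `{y = x tan (π/(2m))} ∩ {z = 0}`,
i.e. rotation by `π` about that line. -/
def reflLine (m : ℕ) : Function.End (EuclideanSpace ℝ (Fin 3)) :=
  fun p => WithLp.toLp 2 ![Real.cos (Real.pi / m) * p 0 + Real.sin (Real.pi / m) * p 1,
    Real.sin (Real.pi / m) * p 0 - Real.cos (Real.pi / m) * p 1, -p 2]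

/-- The symmetry group `G[m]`, generated (under composition) by the two involutive
isometries `reflY` and `reflLine m`; since both generators are involutions, the
submonoid they generate in `Function.End ℝ³` coincides, as a set of maps, with the
subgroup of `O(3)` they generate. -/
def symGroup (m : ℕ) : Submonoid (Function.End (EuclideanSpace ℝ (Fin 3))) :=
  Submonoid.closure {reflY, reflLine m}

/-- The pre-initial surface `Σ̌[m,ζ,ξ] = ⋃_{g ∈ G[m]} g (Γ₋₁ ∪ Γ₀ ∪ Γ₁)`. -/
def preInitialSurface (Ψ : ℝ → ℝ) (m : ℕ) (ζ ξ : ℝ) : Set (EuclideanSpace ℝ (Fin 3)) :=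
  ⋃ g ∈ symGroup m, (g : EuclideanSpace ℝ (Fin 3) → EuclideanSpace ℝ (Fin 3)) ''
    (GammaNeg m ζ ξ ∪ Gamma0 Ψ m ζ ξ ∪ Gamma1 Ψ m ζ ξ)



-- ===== helper lemmas =====
open Real hiding arcosh arcosh_nonneg continuousOn_arcosh
open Set
local notation "E3" => EuclideanSpace ℝ (Fin 3)

lemma vec_eta (p : E3) : WithLp.toLp 2 ![p 0, p 1, p 2] = p := by
  ext i; fin_cases i <;> rfl

lemma vec3_eq_iff {a b c a' b' c' : ℝ} :
    (WithLp.toLp 2 ![a,b,c] : E3) = WithLp.toLp 2 ![a',b',c'] ↔ a = a' ∧ b = b' ∧ c = c' := by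
  constructor
  · intro h
    have h := congrArg WithLp.ofLp h
    exact ⟨congrFun h 0, congrFun h 1, congrFun h 2⟩
  · rintro ⟨rfl, rfl, rfl⟩; rfl

lemma vec3_eq_iff' {a b c a' b' c' : ℝ} :
    (WithLp.toLp 2 ![a,b,c] : E3).ofLp = ![a',b',c'] ↔ a = a' ∧ b = b' ∧ c = c' := by
  constructor
  · intro h
    exact ⟨congrFun h 0, congrFun h 1, congrFun h 2⟩
  · rintro ⟨rfl, rfl, rfl⟩; rfl

lemma toE3 {p : E3} {v : Fin 3 → ℝ} (h : p.ofLp = v) : p = WithLp.toLp 2 v := by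
  rw [← h]

lemma vec3_apply (a b c : ℝ) : (WithLp.toLp 2 ![a,b,c] : E3) 0 = a ∧ (WithLp.toLp 2 ![a,b,c] : E3) 1 = b ∧ (WithLp.toLp 2 ![a,b,c] : E3) 2 = c :=
  ⟨rfl, rfl, rfl⟩

lemma norm_vec3 {p : E3} {a b c : ℝ} (hp : p = ![a,b,c]) :
    ‖p‖ = Real.sqrt (a^2 + b^2 + c^2) := by
  have h := EuclideanSpace.norm_eq (𝕜 := ℝ) p
  refine h.trans ?_
  congr 1
  rw [Fin.sum_univ_three, hp]
  simp [Real.norm_eq_abs, sq_abs]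

lemma norm_vec3_eq_one {p : E3} {a b c : ℝ} (hp : p = ![a,b,c]) (h : a^2 + b^2 + c^2 = 1) :
    ‖p‖ = 1 := by
  rw [norm_vec3 hp, h, Real.sqrt_one]

lemma norm_eq_one_iff {p : E3} {a b c : ℝ} (hp : p = ![a,b,c]) :
    ‖p‖ = 1 ↔ a^2 + b^2 + c^2 = 1 := by
  rw [norm_vec3 hp]
  constructor
  · intro h
    have h2 : Real.sqrt (a^2+b^2+c^2) ^ 2 = 1 := by rw [h]; norm_num
    rwa [Real.sq_sqrt (by positivity)] at h2
  · intro h; rw [h, Real.sqrt_one]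

lemma continuous_mk3 {X : Type*} [TopologicalSpace X] {f g h : X → ℝ} {P : X → E3}
    (hP : ∀ x, P x = ![f x, g x, h x])
    (hf : Continuous f) (hg : Continuous g) (hh : Continuous h) :
    Continuous P := by
  have H : Continuous fun x => (![f x, g x, h x] : Fin 3 → ℝ) := by
    apply continuous_pi
    intro i
    fin_cases i
    · exact hf
    · exact hg
    · exact hh
  have h2 := (PiLp.continuousLinearEquiv 2 ℝ (fun _ : Fin 3 => ℝ)).symm.continuous.comp H
  have : P = fun x => (PiLp.continuousLinearEquiv 2 ℝ (fun _ : Fin 3 => ℝ)).symm ![f x, g x, h x] := by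
    funext x; rw [← hP x]; rfl
  rw [this]; exact h2

lemma continuousOn_mk3 {f g h : ℝ → ℝ} {P : ℝ → E3} {s : Set ℝ}
    (hP : ∀ x, P x = ![f x, g x, h x])
    (hf : ContinuousOn f s) (hg : ContinuousOn g s) (hh : ContinuousOn h s) :
    ContinuousOn P s := by
  have H : ContinuousOn (fun x => (![f x, g x, h x] : Fin 3 → ℝ)) s := by
    apply continuousOn_pi.2
    intro i
    fin_cases i
    · exact hf
    · exact hg
    · exact hh
  have h2 := ((PiLp.continuousLinearEquiv 2 ℝ (fun _ : Fin 3 => ℝ)).symm.continuous.comp_continuousOn H)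
  have : P = fun x => (PiLp.continuousLinearEquiv 2 ℝ (fun _ : Fin 3 => ℝ)).symm ![f x, g x, h x] := by
    funext x; rw [← hP x]; rfl
  rw [this]; exact h2

lemma continuous_coord (i : Fin 3) : Continuous fun p : E3 => p i := by
  exact (continuous_apply i).comp (PiLp.continuousLinearEquiv 2 ℝ (fun _ : Fin 3 => ℝ)).continuous

-- arcosh lemmas
lemma arcosh_one : arcosh 1 = 0 := by
  simp [arcosh]

lemma arcosh_nonneg {x : ℝ} (hx : 1 ≤ x) : 0 ≤ arcosh x := by
  unfold arcosh
  have : (1:ℝ) ≤ x + Real.sqrt (x^2-1) := le_add_of_le_of_nonneg hx (Real.sqrt_nonneg _)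
  exact Real.log_nonneg this

lemma log_le_arcosh {x : ℝ} (hx : 1 ≤ x) : Real.log x ≤ arcosh x := by
  unfold arcosh
  apply Real.log_le_log (by linarith)
  exact le_add_of_le_of_nonneg le_rfl (Real.sqrt_nonneg _)

lemma arcosh_le_log {x : ℝ} (hx : 1 ≤ x) : arcosh x ≤ Real.log (2*x) := by
  unfold arcosh
  apply Real.log_le_log (by positivity)
  have h2 : Real.sqrt (x^2-1) ≤ Real.sqrt (x^2) := Real.sqrt_le_sqrt (by linarith)
  rw [Real.sqrt_sq (by linarith : (0:ℝ) ≤ x)] at h2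
  linarith

lemma arcosh_mono {x y : ℝ} (hx : 1 ≤ x) (hxy : x ≤ y) : arcosh x ≤ arcosh y := by
  unfold arcosh
  apply Real.log_le_log (by positivity)
  have : Real.sqrt (x^2-1) ≤ Real.sqrt (y^2-1) := by
    apply Real.sqrt_le_sqrt; nlinarith
  linarith

lemma continuousOn_arcosh : ContinuousOn arcosh {x : ℝ | 1 ≤ x} := by
  unfold arcosh
  apply ContinuousOn.log
  · exact (continuous_id.add (Real.continuous_sqrt.comp (by continuity))).continuousOn
  · intro x hx
    simp only [mem_setOf_eq] at hx
    have := Real.sqrt_nonneg (x^2-1)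
    positivity


-- ===== rotation algebra =====

def RotK (m : ℕ) (k : ℤ) : E3 → E3 := fun p =>
  WithLp.toLp 2 ![Real.cos (k * Real.pi / m) * p 0 - Real.sin (k * Real.pi / m) * p 1,
    Real.sin (k * Real.pi / m) * p 0 + Real.cos (k * Real.pi / m) * p 1,
    (-1 : ℝ) ^ k * p 2]

lemma neg_one_zpow_sq (k : ℤ) : ((-1:ℝ)^k) * ((-1:ℝ)^k) = 1 := by
  rw [← zpow_add₀ (by norm_num : (-1:ℝ) ≠ 0)]
  have : ((-1:ℝ))^(k+k) = ((-1:ℝ)^2)^k := by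
    rw [← zpow_natCast ((-1:ℝ)) 2, ← zpow_mul]
    congr 1; ring
  rw [this]; norm_num

lemma neg_one_zpow_neg (k : ℤ) : ((-1:ℝ))^(-k) = (-1:ℝ)^k := by
  rw [zpow_neg]
  exact inv_eq_of_mul_eq_one_right (by rw [neg_one_zpow_sq])

lemma RotK_zero (m : ℕ) : RotK m 0 = id := by
  funext p
  show (WithLp.toLp 2 ![_,_,_] : E3) = p
  rw [← vec_eta p]
  simp [RotK]

lemma RotK_comp (m : ℕ) (j k : ℤ) : RotK m j ∘ RotK m k = RotK m (j + k) := by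
  funext p
  show (WithLp.toLp 2 ![_,_,_] : E3) = WithLp.toLp 2 ![_,_,_]
  rw [vec3_eq_iff]
  have hang : ((j+k : ℤ) : ℝ) * Real.pi / m = j * Real.pi / m + k * Real.pi / m := by
    push_cast; ring
  have hc := Real.cos_add (j * Real.pi / m) (k * Real.pi / m)
  have hs := Real.sin_add (j * Real.pi / m) (k * Real.pi / m)
  have hz : (-1:ℝ)^(j+k) = (-1:ℝ)^j * (-1:ℝ)^k := zpow_add₀ (by norm_num) j k
  refine ⟨?_, ?_, ?_⟩ <;>
  · simp only [RotK, Matrix.cons_val_zero, Matrix.cons_val_one, Matrix.head_cons,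
      Matrix.cons_val_two, Matrix.tail_cons, hang, hc, hs, hz]
    try ring

lemma reflY_comp_RotK (m : ℕ) (k : ℤ) : reflY ∘ RotK m k = RotK m (-k) ∘ reflY := by
  funext p
  show (WithLp.toLp 2 ![_,_,_] : E3) = WithLp.toLp 2 ![_,_,_]
  rw [vec3_eq_iff]
  have hang : ((-k : ℤ) : ℝ) * Real.pi / m = -(k * Real.pi / m) := by push_cast; ring
  refine ⟨?_, ?_, ?_⟩ <;>
  · simp only [reflY, RotK, Matrix.cons_val_zero, Matrix.cons_val_one, Matrix.head_cons,
      Matrix.cons_val_two, Matrix.tail_cons, hang, Real.cos_neg, Real.sin_neg,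
      neg_one_zpow_neg]
    try ring

lemma reflY_comp_reflY : reflY ∘ reflY = id := by
  funext p
  show (WithLp.toLp 2 ![_,_,_] : E3) = p
  rw [← vec_eta p]
  simp [reflY]

lemma reflLine_eq (m : ℕ) : reflLine m = RotK m 1 ∘ reflY := by
  funext p
  show (WithLp.toLp 2 ![_,_,_] : E3) = WithLp.toLp 2 ![_,_,_]
  rw [vec3_eq_iff]
  refine ⟨?_, ?_, ?_⟩ <;>
  · simp only [reflY, RotK, Matrix.cons_val_zero, Matrix.cons_val_one, Matrix.head_cons,
      Matrix.cons_val_two, Matrix.tail_cons]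
    push_cast
    ring_nf
    try rfl

lemma reflY_apply (p : E3) : reflY p = ![p 0, -p 1, p 2] := rfl

lemma RotK_apply (m : ℕ) (k : ℤ) (p : E3) :
    RotK m k p = ![Real.cos (k * Real.pi / m) * p 0 - Real.sin (k * Real.pi / m) * p 1,
      Real.sin (k * Real.pi / m) * p 0 + Real.cos (k * Real.pi / m) * p 1,
      (-1 : ℝ) ^ k * p 2] := rfl

lemma norm_reflY (p : E3) : ‖reflY p‖ = ‖p‖ := by
  rw [norm_vec3 (reflY_apply p), norm_vec3 (congrArg WithLp.ofLp (vec_eta p)).symm]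
  ring_nf

lemma norm_RotK (m : ℕ) (k : ℤ) (p : E3) : ‖RotK m k p‖ = ‖p‖ := by
  rw [norm_vec3 (RotK_apply m k p), norm_vec3 (congrArg WithLp.ofLp (vec_eta p)).symm]
  congr 1
  have h1 := Real.sin_sq_add_cos_sq (k * Real.pi / m)
  have h2 := neg_one_zpow_sq k
  nlinarith [sq_nonneg (p 0), sq_nonneg (p 1), sq_nonneg (p 2)]

lemma continuous_reflY : Continuous reflY := by
  refine continuous_mk3 (f := fun p : E3 => p 0) (g := fun p => - p 1) (h := fun p => p 2)
    (fun p => rfl) (continuous_coord 0) (continuous_coord 1).neg (continuous_coord 2)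

lemma continuous_RotK (m : ℕ) (k : ℤ) : Continuous (RotK m k) := by
  refine continuous_mk3 (fun p => rfl) ?_ ?_ ?_
  · exact ((continuous_const.mul (continuous_coord 0)).sub (continuous_const.mul (continuous_coord 1)))
  · exact ((continuous_const.mul (continuous_coord 0)).add (continuous_const.mul (continuous_coord 1)))
  · exact continuous_const.mul (continuous_coord 2)

-- elements of the symmetry group
lemma reflY_mem (m : ℕ) : (reflY : Function.End E3) ∈ symGroup m :=
  Submonoid.subset_closure (Set.mem_insert _ _)

lemma reflLine_mem (m : ℕ) : (reflLine m : Function.End E3) ∈ symGroup m :=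
  Submonoid.subset_closure (Set.mem_insert_of_mem _ rfl)

lemma rot1_mem (m : ℕ) : ∃ g ∈ symGroup m, (g : E3 → E3) = RotK m 1 := by
  refine ⟨reflLine m * reflY, mul_mem (reflLine_mem m) (reflY_mem m), ?_⟩
  show (reflLine m) ∘ reflY = RotK m 1
  erw [reflLine_eq m, Function.comp_assoc, reflY_comp_reflY, Function.comp_id]

lemma rotNeg1_mem (m : ℕ) : ∃ g ∈ symGroup m, (g : E3 → E3) = RotK m (-1) := by
  refine ⟨reflY * reflLine m, mul_mem (reflY_mem m) (reflLine_mem m), ?_⟩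
  show reflY ∘ reflLine m = RotK m (-1)
  erw [reflLine_eq m, ← Function.comp_assoc, reflY_comp_RotK, Function.comp_assoc,
    reflY_comp_reflY, Function.comp_id]

lemma rotK_mem (m : ℕ) (k : ℤ) : ∃ g ∈ symGroup m, (g : E3 → E3) = RotK m k := by
  induction k using Int.induction_on with
  | zero => exact ⟨1, one_mem _, (RotK_zero m).symm⟩
  | succ n ih =>
    obtain ⟨g, hg, hge⟩ := ih
    obtain ⟨r, hr, hre⟩ := rot1_mem m
    refine ⟨r * g, mul_mem hr hg, ?_⟩
    show (r : E3 → E3) ∘ g = _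
    rw [hge, hre, RotK_comp]
    congr 1; ring
  | pred n ih =>
    obtain ⟨g, hg, hge⟩ := ih
    obtain ⟨r, hr, hre⟩ := rotNeg1_mem m
    refine ⟨r * g, mul_mem hr hg, ?_⟩
    show (r : E3 → E3) ∘ g = _
    rw [hge, hre, RotK_comp]
    congr 1; ring

/-- Every element of the symmetry group acts as `RotK m k` or `RotK m k ∘ reflY`. -/
lemma symGroup_classify (m : ℕ) :
    ∀ g ∈ symGroup m, (∃ k : ℤ, (g : E3 → E3) = RotK m k) ∨
      (∃ k : ℤ, (g : E3 → E3) = RotK m k ∘ reflY) := by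
  intro g hg
  induction hg using Submonoid.closure_induction with
  | mem x hx =>
    rcases hx with h | h
    · right; exact ⟨0, by rw [h, RotK_zero]; rfl⟩
    · right; refine ⟨1, ?_⟩
      rw [Set.mem_singleton_iff] at h
      rw [h]; exact reflLine_eq m
  | one => exact Or.inl ⟨0, (RotK_zero m).symm⟩
  | mul a b _ _ iha ihb =>
    have hab : ((a * b : Function.End E3) : E3 → E3) = (a : E3 → E3) ∘ (b : E3 → E3) := rfl
    rcases iha with ⟨j, hj⟩ | ⟨j, hj⟩ <;> rcases ihb with ⟨k, hk⟩ | ⟨k, hk⟩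
    · exact Or.inl ⟨j + k, by rw [hab, hj, hk, RotK_comp]⟩
    · exact Or.inr ⟨j + k, by erw [hab, hj, hk, ← Function.comp_assoc, RotK_comp]⟩
    · refine Or.inr ⟨j + -k, ?_⟩
      erw [hab, hj, hk, Function.comp_assoc, reflY_comp_RotK, ← Function.comp_assoc,
        RotK_comp]
    · refine Or.inl ⟨j + -k, ?_⟩
      erw [hab, hj, hk]
      funext p
      have h1 : reflY (RotK m k (reflY p)) = RotK m (-k) (reflY (reflY p)) :=
        congrFun (reflY_comp_RotK m k) (reflY p)
      have h2 : reflY (reflY p) = p := congrFun reflY_comp_reflY p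
      show RotK m j (reflY (RotK m k (reflY p))) = RotK m (j + -k) p
      rw [h1, h2]; exact congrFun (RotK_comp m j (-k)) p

lemma symGroup_norm (m : ℕ) : ∀ g ∈ symGroup m, ∀ p : E3, ‖(g : E3 → E3) p‖ = ‖p‖ := by
  intro g hg
  rcases symGroup_classify m g hg with ⟨k, hk⟩ | ⟨k, hk⟩ <;> intro p <;> rw [hk]
  · exact norm_RotK m k p
  · exact (norm_RotK m k _).trans (norm_reflY p)

-- ===== numeric context =====

/-- Largeness condition on `m`. -/
def mOK (m : ℕ) (c : ℝ) : Prop := 409600 * Real.exp c + 20 * c + 1000 ≤ (m : ℝ)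

section Numeric

variable {m : ℕ} {c ζ ξ : ℝ}

lemma mOK.m_ge (h : mOK m c) (hc : 0 < c) : (1000 : ℝ) ≤ m := by
  have h1 := Real.exp_pos c
  unfold mOK at h; nlinarith

lemma mOK.m_pos (h : mOK m c) (hc : 0 < c) : (0:ℝ) < m := lt_of_lt_of_le (by norm_num) (h.m_ge hc)

lemma mOK.c_le (h : mOK m c) (hc : 0 < c) : c ≤ (m:ℝ)/20 := by
  have h1 := Real.exp_pos c
  unfold mOK at h; nlinarith

lemma mOK.exp_le (h : mOK m c) (hc : 0 < c) : 409600 * Real.exp c ≤ (m:ℝ) := by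
  unfold mOK at h; nlinarith

/-- The key smallness: `m² e^{ζ-m/2} ≤ 1/100`. -/
lemma mOK.key (h : mOK m c) (hc : 0 < c) (hζ : |ζ| ≤ c) :
    (m:ℝ)^2 * Real.exp (ζ - (m:ℝ)/2) ≤ 1/100 := by
  have hm1000 := h.m_ge hc
  have hmpos := h.m_pos hc
  have hexp : Real.exp ((m:ℝ)/2) ≥ (m:ℝ)^4 / 4096 := by
    have h4 : Real.exp ((m:ℝ)/2) = (Real.exp ((m:ℝ)/8))^4 := by
      rw [← Real.exp_nat_mul]
      push_cast
      ring_nf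
    have h5 : (m:ℝ)/8 ≤ Real.exp ((m:ℝ)/8) := by
      have := Real.add_one_le_exp ((m:ℝ)/8); linarith
    have h6 : ((m:ℝ)/8)^4 ≤ (Real.exp ((m:ℝ)/8))^4 := by
      apply pow_le_pow_left₀ (by positivity) h5
    rw [h4]
    calc (m:ℝ)^4/4096 = ((m:ℝ)/8)^4 := by ring
    _ ≤ _ := h6
  have hζc : ζ ≤ c := (abs_le.1 hζ).2
  have h7 : Real.exp (ζ - (m:ℝ)/2) = Real.exp ζ / Real.exp ((m:ℝ)/2) := by
    rw [Real.exp_sub]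
  have h8 : Real.exp ζ ≤ Real.exp c := Real.exp_le_exp.2 hζc
  have hepos : (0:ℝ) < Real.exp ((m:ℝ)/2) := Real.exp_pos _
  have h9 : Real.exp (ζ - (m:ℝ)/2) ≤ Real.exp c * 4096 / (m:ℝ)^4 := by
    rw [h7, div_le_div_iff₀ hepos (by positivity)]
    calc Real.exp ζ * (m:ℝ)^4 ≤ Real.exp c * (m:ℝ)^4 := by
          have h4pos : (0:ℝ) < (m:ℝ)^4 := by positivity
          exact mul_le_mul_of_nonneg_right h8 (le_of_lt h4pos)
    _ = (Real.exp c * 4096) * ((m:ℝ)^4/4096) := by ring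
    _ ≤ (Real.exp c * 4096) * Real.exp ((m:ℝ)/2) := by
        apply mul_le_mul_of_nonneg_left hexp (by positivity)
  have h10 : (m:ℝ)^2 * Real.exp (ζ - (m:ℝ)/2) ≤ 4096 * Real.exp c / (m:ℝ)^2 := by
    calc (m:ℝ)^2 * Real.exp (ζ - (m:ℝ)/2) ≤ (m:ℝ)^2 * (Real.exp c * 4096 / (m:ℝ)^4) := by
          apply mul_le_mul_of_nonneg_left h9 (by positivity)
    _ = 4096 * Real.exp c / (m:ℝ)^2 := by field_simp
  have h11 : 4096 * Real.exp c / (m:ℝ)^2 ≤ 1/100 := by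
    rw [div_le_div_iff₀ (by positivity) (by norm_num)]
    have h12 : 409600 * Real.exp c ≤ (m:ℝ) := h.exp_le hc
    nlinarith [Real.exp_pos c]
  linarith

lemma mOK.tau_pos (h : mOK m c) (hc : 0 < c) : 0 < tauOf m ζ := by
  have := h.m_pos hc
  unfold tauOf
  positivity

lemma mOK.zeta_le_m (h : mOK m c) (hc : 0 < c) (hζ : |ζ| ≤ c) : ζ ≤ (m:ℝ)/20 :=
  le_trans (abs_le.1 hζ).2 (h.c_le hc)

lemma mOK.tau_le (h : mOK m c) (hc : 0 < c) (hζ : |ζ| ≤ c) : tauOf m ζ ≤ 1/(20*m) := by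
  have hm := h.m_ge hc
  have hmp := h.m_pos hc
  have h1 : Real.exp (ζ - (m:ℝ)/2) ≤ 1 := by
    rw [show (1:ℝ) = Real.exp 0 by simp]
    apply Real.exp_le_exp.2
    have := h.zeta_le_m hc hζ
    linarith
  unfold tauOf
  calc 1/(20*(m:ℝ)) * Real.exp (ζ - (m:ℝ)/2) ≤ 1/(20*m) * 1 := by
        apply mul_le_mul_of_nonneg_left h1 (by positivity)
  _ = 1/(20*m) := by ring

lemma mOK.tau_m2 (h : mOK m c) (hc : 0 < c) (hζ : |ζ| ≤ c) :
    tauOf m ζ * (m:ℝ)^2 ≤ 1/2000 := by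
  have hk := h.key hc hζ
  have hm := h.m_ge hc
  have hmp := h.m_pos hc
  have hep := Real.exp_pos (ζ - (m:ℝ)/2)
  unfold tauOf
  have : 1/(20*(m:ℝ)) * Real.exp (ζ - (m:ℝ)/2) * (m:ℝ)^2
      = ((m:ℝ)^2 * Real.exp (ζ - (m:ℝ)/2)) / (20*m) := by field_simp
  rw [this]
  rw [div_le_iff₀ (by positivity)]
  nlinarith

lemma mOK.aOf_eq (h : mOK m c) (hc : 0 < c) :
    aOf m ζ = arcosh (Real.exp ((m:ℝ)/2 - ζ)) := by
  have ht := h.tau_pos (ζ := ζ) hc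
  unfold aOf phiCat
  rw [← mul_assoc, inv_mul_cancel₀ (ne_of_gt ht), one_mul]
  congr 1
  unfold tauOf
  have hmp := h.m_pos hc
  rw [div_eq_iff (by positivity)]
  have hone : Real.exp ((m:ℝ)/2 - ζ) * Real.exp (ζ - (m:ℝ)/2) = 1 := by
    rw [← Real.exp_add, show (m:ℝ)/2 - ζ + (ζ - (m:ℝ)/2) = 0 by ring, Real.exp_zero]
  linear_combination (-(1/(20*(m:ℝ)))) * hone

lemma mOK.exp_arg_ge (h : mOK m c) (hc : 0 < c) (hζ : |ζ| ≤ c) :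
    1 ≤ Real.exp ((m:ℝ)/2 - ζ) := by
  rw [show (1:ℝ) = Real.exp 0 by simp]
  apply Real.exp_le_exp.2
  have h1 := h.zeta_le_m hc hζ
  have h2 := h.m_ge hc
  linarith

lemma mOK.a_lb (h : mOK m c) (hc : 0 < c) (hζ : |ζ| ≤ c) : (m:ℝ)/2 - ζ ≤ aOf m ζ := by
  rw [h.aOf_eq hc]
  have h1 := log_le_arcosh (h.exp_arg_ge hc hζ)
  rwa [Real.log_exp] at h1

lemma mOK.a_ub (h : mOK m c) (hc : 0 < c) (hζ : |ζ| ≤ c) : aOf m ζ ≤ (m:ℝ)/2 - ζ + 1 := by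
  rw [h.aOf_eq hc]
  have h1 := arcosh_le_log (h.exp_arg_ge hc hζ)
  have h2 : Real.log (2 * Real.exp ((m:ℝ)/2 - ζ)) = Real.log 2 + ((m:ℝ)/2 - ζ) := by
    rw [Real.log_mul (by norm_num) (ne_of_gt (Real.exp_pos _)), Real.log_exp]
  have h3 : Real.log 2 ≤ 1 := by
    have := Real.log_le_sub_one_of_pos (by norm_num : (0:ℝ) < 2); linarith
  linarith

lemma mOK.a_pos (h : mOK m c) (hc : 0 < c) (hζ : |ζ| ≤ c) : 1 ≤ aOf m ζ := by
  have h1 := h.a_lb hc hζ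
  have h2 := h.m_ge hc
  have h3 := h.zeta_le_m hc hζ
  linarith

lemma mOK.z0_pos (h : mOK m c) (hc : 0 < c) (hζ : |ζ| ≤ c) (hξ : |ξ| ≤ c) :
    0 < z0Of m ζ ξ := by
  have ht := h.tau_pos (ζ := ζ) hc
  have ha := h.a_lb hc hζ
  have h2 := h.m_ge hc
  have h3 := h.c_le hc
  have hξ1 := (abs_le.1 hξ).1
  have hζ1 := (abs_le.1 hζ).2
  unfold z0Of
  have : ξ + aOf m ζ > 0 := by nlinarith
  nlinarith

lemma mOK.z0_le (h : mOK m c) (hc : 0 < c) (hζ : |ζ| ≤ c) (hξ : |ξ| ≤ c) :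
    z0Of m ζ ξ ≤ tauOf m ζ * m := by
  have ht := h.tau_pos (ζ := ζ) hc
  have ha := h.a_ub hc hζ
  have h2 := h.m_ge hc
  have h3 := h.c_le hc
  have hξ1 := (abs_le.1 hξ).2
  have hζ1 := (abs_le.1 hζ).1
  unfold z0Of
  have : ξ + aOf m ζ ≤ (m:ℝ) := by nlinarith
  nlinarith

lemma mOK.hh_pos (h : mOK m c) (hc : 0 < c) (hζ : |ζ| ≤ c) (hξ : |ξ| ≤ c) :
    0 < z0Of m ζ ξ + tauOf m ζ * aOf m ζ := by
  have := h.z0_pos hc hζ hξ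
  have ht := h.tau_pos (ζ := ζ) hc
  have ha := h.a_pos hc hζ
  nlinarith

lemma mOK.hh_le (h : mOK m c) (hc : 0 < c) (hζ : |ζ| ≤ c) (hξ : |ξ| ≤ c) :
    z0Of m ζ ξ + tauOf m ζ * aOf m ζ ≤ 2 * (tauOf m ζ * m) := by
  have h1 := h.z0_le hc hζ hξ
  have ht := h.tau_pos (ζ := ζ) hc
  have ha := h.a_ub hc hζ
  have h2 := h.m_ge hc
  have h3 := h.zeta_le_m hc hζ
  have hζ1 : -((m:ℝ)/20) ≤ ζ := by
    have := (abs_le.1 hζ).1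
    have := h.c_le hc
    linarith
  have h4 : aOf m ζ ≤ (m:ℝ) := by linarith
  nlinarith [mul_le_mul_of_nonneg_left h4 (le_of_lt ht)]

lemma mOK.log_m_le (h : mOK m c) (hc : 0 < c) : Real.log (m:ℝ) ≤ (m:ℝ)/15 := by
  have hm := h.m_ge hc
  have hmp := h.m_pos hc
  have h1 : Real.log (m:ℝ) = 2 * Real.log (Real.sqrt m) := by
    rw [Real.log_sqrt (le_of_lt hmp)]; ring
  have h2 : Real.log (Real.sqrt m) ≤ Real.sqrt m - 1 :=
    Real.log_le_sub_one_of_pos (Real.sqrt_pos.2 hmp)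
  have h3 : Real.sqrt m ≤ (m:ℝ)/30 := by
    have hb : (m:ℝ) ≤ ((m:ℝ)/30)^2 := by nlinarith
    have := Real.sqrt_le_sqrt hb
    rwa [Real.sqrt_sq (by positivity)] at this
  linarith

lemma mOK.phiCat_le (h : mOK m c) (hc : 0 < c) (hζ : |ζ| ≤ c) :
    ∀ r, tauOf m ζ ≤ r → r ≤ 2 → 0 ≤ phiCat (tauOf m ζ) r ∧ phiCat (tauOf m ζ) r ≤ tauOf m ζ * m := by
  intro r h1 h2
  have ht := h.tau_pos (ζ := ζ) hc
  have hm := h.m_ge hc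
  have hmp := h.m_pos hc
  have hr1 : 1 ≤ r / tauOf m ζ := (one_le_div ht).2 h1
  constructor
  · unfold phiCat
    exact mul_nonneg (le_of_lt ht) (arcosh_nonneg hr1)
  · unfold phiCat
    have h3 : r / tauOf m ζ ≤ 2 / tauOf m ζ := by
      exact (div_le_div_iff_of_pos_right ht).2 h2
    have h4 : arcosh (r / tauOf m ζ) ≤ arcosh (2 / tauOf m ζ) := arcosh_mono hr1 h3
    have h5 : arcosh (2 / tauOf m ζ) ≤ Real.log (2 * (2/ tauOf m ζ)) :=
      arcosh_le_log (le_trans hr1 h3)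
    have h6 : Real.log (2 * (2/tauOf m ζ)) = Real.log 4 - Real.log (tauOf m ζ) := by
      rw [show 2 * (2/tauOf m ζ) = 4 / tauOf m ζ by ring]
      rw [Real.log_div (by norm_num) (ne_of_gt ht)]
    have h7 : Real.log (tauOf m ζ) = -(Real.log (20*m)) + (ζ - (m:ℝ)/2) := by
      unfold tauOf
      rw [Real.log_mul (by positivity) (ne_of_gt (Real.exp_pos _)), Real.log_exp]
      rw [one_div, Real.log_inv]
    have h8 : Real.log (20*(m:ℝ)) = Real.log 20 + Real.log m := by
      rw [Real.log_mul (by norm_num) (ne_of_gt hmp)]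
    have h9 : Real.log 20 ≤ 19 := by
      have := Real.log_le_sub_one_of_pos (by norm_num : (0:ℝ) < 20); linarith
    have h10 : Real.log 4 ≤ 3 := by
      have := Real.log_le_sub_one_of_pos (by norm_num : (0:ℝ) < 4); linarith
    have h11 := h.log_m_le hc
    have h12 := h.zeta_le_m hc hζ
    have h13 : -ζ ≤ (m:ℝ)/20 := by
      have := (abs_le.1 hζ).1
      have := h.c_le hc
      linarith
    have harc : arcosh (r / tauOf m ζ) ≤ (m:ℝ) := by
      calc arcosh (r / tauOf m ζ) ≤ Real.log 4 - Real.log (tauOf m ζ) := by linarith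
      _ = Real.log 4 + Real.log (20*(m:ℝ)) - ζ + (m:ℝ)/2 := by rw [h7]; ring
      _ ≤ 3 + (19 + (m:ℝ)/15) + (m:ℝ)/20 + (m:ℝ)/2 := by rw [h8]; linarith
      _ ≤ (m:ℝ) := by linarith
    calc tauOf m ζ * arcosh (r/tauOf m ζ) ≤ tauOf m ζ * m := by
          apply mul_le_mul_of_nonneg_left harc (le_of_lt ht)
    _ = tauOf m ζ * m := rfl

end Numeric

-- ===== trig facts =====

section Trig

variable {m : ℕ}

lemma alpha_pos (hm : (1000:ℝ) ≤ m) : 0 < Real.pi/(2*m) := by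
  have := Real.pi_pos; positivity

lemma alpha_lt (hm : (1000:ℝ) ≤ m) : Real.pi/(2*m) < Real.pi/2 := by
  have h := Real.pi_pos
  rw [div_lt_div_iff₀ (by linarith) (by norm_num)]
  nlinarith

lemma cos_alpha_pos (hm : (1000:ℝ) ≤ m) : 0 < Real.cos (Real.pi/(2*m)) := by
  apply Real.cos_pos_of_mem_Ioo
  constructor
  · have := Real.pi_pos
    have := alpha_pos hm
    linarith
  · exact alpha_lt hm

lemma sin_alpha_pos (hm : (1000:ℝ) ≤ m) : 0 < Real.sin (Real.pi/(2*m)) := by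
  apply Real.sin_pos_of_pos_of_lt_pi (alpha_pos hm)
  have := alpha_lt hm
  have := Real.pi_pos
  linarith

lemma one_sub_cos_alpha (hm : (1000:ℝ) ≤ m) :
    1/(2*(m:ℝ)^2) ≤ 1 - Real.cos (Real.pi/(2*m)) := by
  have hπ := Real.pi_pos
  have hm0 : (0:ℝ) < m := by linarith
  have hj : 2/Real.pi * (Real.pi/(4*m)) ≤ Real.sin (Real.pi/(4*m)) := by
    apply Real.mul_le_sin (by positivity)
    rw [div_le_div_iff₀ (by positivity) (by norm_num)]
    nlinarith
  have hj2 : 1/(2*(m:ℝ)) ≤ Real.sin (Real.pi/(4*m)) := by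
    have : 2/Real.pi * (Real.pi/(4*m)) = 1/(2*(m:ℝ)) := by
      field_simp
      ring
    linarith [hj, this.symm.le]
  have hsq : Real.sin (Real.pi/(4*m))^2 = 1/2 - Real.cos (Real.pi/(2*m))/2 := by
    have hc := Real.cos_sq (Real.pi/(4*m))
    have hs := Real.sin_sq_add_cos_sq (Real.pi/(4*m))
    have h2 : 2*(Real.pi/(4*m)) = Real.pi/(2*m) := by ring
    rw [h2] at hc
    linarith
  have hb : (1/(2*(m:ℝ)))^2 ≤ Real.sin (Real.pi/(4*m))^2 := by
    apply pow_le_pow_left₀ (by positivity) hj2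
  rw [hsq] at hb
  have : (1/(2*(m:ℝ)))^2 = 1/(4*(m:ℝ)^2) := by field_simp; ring
  rw [this] at hb
  have hm2 : (0:ℝ) < (m:ℝ)^2 := by positivity
  rw [div_le_iff₀ (by positivity)] at hb ⊢
  nlinarith

end Trig

-- ===== the arc parametrization =====

/-- The explicit curve: intersection of the graph `z = φ(r)` (as a function of the distance `r`
to `(1,0)`) with the unit sphere, at distance-parameter `r`, in the upper half-plane. -/
def Pmap (φ : ℝ → ℝ) (r : ℝ) : E3 :=
  WithLp.toLp 2 ![1 - (φ r^2 + r^2)/2,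
    Real.sqrt ((1 - φ r^2) - (1 - (φ r^2 + r^2)/2)^2),
    φ r]

/-- A generic "graph over the wedge, meeting the sphere, upper half" set. -/
def Tset (m : ℕ) (φ : ℝ → ℝ) (r₀ : ℝ) : Set E3 :=
  {p | (∃ x y : ℝ, (x, y) ∈ wedge m ∧ r₀^2 ≤ (x-1)^2 + y^2 ∧
        p = ![x, y, φ (Real.sqrt ((x-1)^2 + y^2))]) ∧ ‖p‖ = 1 ∧ 0 ≤ p 1}

def rmaxOf (m : ℕ) (c₀ : ℝ) : ℝ :=
  Real.sqrt (2 - c₀^2 - 2 * Real.sqrt (1 - c₀^2) * Real.cos (Real.pi/(2*m)))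

section Arc

variable {m : ℕ} {φ : ℝ → ℝ} {c₀ H r₀ : ℝ}

lemma le_of_sq_le_sq' {a b : ℝ} (ha : 0 ≤ a) (hb : 0 ≤ b) (h : a^2 ≤ b^2) : a ≤ b := by
  nlinarith

lemma my_sqrt_le_one {x : ℝ} (h : x ≤ 1) : Real.sqrt x ≤ 1 := by
  rcases le_or_gt x 0 with h0 | h0
  · rw [Real.sqrt_eq_zero_of_nonpos h0]; norm_num
  · have := Real.sqrt_le_sqrt h
    rwa [Real.sqrt_one] at this

lemma rmax_sq (hc₀ : c₀^2 ≤ 1) :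
    (rmaxOf m c₀)^2 = 2 - c₀^2 - 2 * Real.sqrt (1 - c₀^2) * Real.cos (Real.pi/(2*m)) := by
  apply Real.sq_sqrt
  have hρ0 : 0 ≤ Real.sqrt (1 - c₀^2) := Real.sqrt_nonneg _
  have hρ1 : Real.sqrt (1 - c₀^2) ≤ 1 := my_sqrt_le_one (by nlinarith [sq_nonneg c₀])
  have hρsq : (Real.sqrt (1 - c₀^2))^2 = 1 - c₀^2 := Real.sq_sqrt (by linarith)
  have hcos1 : Real.cos (Real.pi/(2*m)) ≤ 1 := Real.cos_le_one _
  have hcosm1 : -1 ≤ Real.cos (Real.pi/(2*m)) := Real.neg_one_le_cos _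
  nlinarith [sq_nonneg (1 - Real.sqrt (1 - c₀^2))]

lemma rmax_ge (hm : (1000:ℝ) ≤ m) (hH : H^2 ≤ 3/(4*(m:ℝ)^2)) (hc₀ : c₀^2 ≤ H^2) :
    1/(2*(m:ℝ)) ≤ rmaxOf m c₀ := by
  have hm0 : (0:ℝ) < m := by linarith
  have hc₀1 : c₀^2 ≤ 1 := by
    have : 3/(4*(m:ℝ)^2) ≤ 1 := by
      rw [div_le_one (by positivity)]; nlinarith
    linarith
  have hsq := rmax_sq (m := m) hc₀1
  have hρ1 : Real.sqrt (1 - c₀^2) ≤ 1 := my_sqrt_le_one (by nlinarith [sq_nonneg c₀])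
  have hρ0 : 0 ≤ Real.sqrt (1 - c₀^2) := Real.sqrt_nonneg _
  have hcos0 : 0 < Real.cos (Real.pi/(2*m)) := cos_alpha_pos hm
  have h1cos := one_sub_cos_alpha hm
  have harg : (1/(2*(m:ℝ)))^2 ≤ (rmaxOf m c₀)^2 := by
    rw [hsq]
    have h2 : 2 * Real.sqrt (1-c₀^2) * Real.cos (Real.pi/(2*m)) ≤ 2 * Real.cos (Real.pi/(2*m)) := by
      nlinarith
    have h3 : (1/(2*(m:ℝ)))^2 = 1/(4*(m:ℝ)^2) := by field_simp; ring
    have e1 : 2*(1/(2*(m:ℝ)^2)) = 1/((m:ℝ)^2) := by ring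
    have e2 : 1/((m:ℝ)^2) - 3/(4*(m:ℝ)^2) = 1/(4*(m:ℝ)^2) := by ring
    rw [h3]
    linarith [hH, hc₀]
  exact le_of_sq_le_sq' (by positivity) (Real.sqrt_nonneg _) harg

lemma rmax_le_two (hc₀ : c₀^2 ≤ 1) (hm : (1000:ℝ) ≤ m) : rmaxOf m c₀ ≤ 2 := by
  have hsq := rmax_sq (m := m) hc₀
  have hρ0 : 0 ≤ Real.sqrt (1 - c₀^2) := Real.sqrt_nonneg _
  have hcos0 : 0 < Real.cos (Real.pi/(2*m)) := cos_alpha_pos hm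
  have : (rmaxOf m c₀)^2 ≤ 2 := by rw [hsq]; nlinarith
  have h0 : 0 ≤ rmaxOf m c₀ := Real.sqrt_nonneg _
  nlinarith

lemma Pmap_congr {φ φ' : ℝ → ℝ} {r : ℝ} (h : φ r = φ' r) : Pmap φ r = Pmap φ' r := by
  unfold Pmap; rw [h]

lemma helper_tan {x y ρ cα sα : ℝ} (hy0 : 0 ≤ y) (hx0 : 0 ≤ x) (hρ0 : 0 ≤ ρ)
    (hc0 : 0 < cα) (hs0 : 0 < sα) (hpyth : sα^2 + cα^2 = 1)
    (hysq : y^2 = ρ^2 - x^2) (hwx : ρ*cα ≤ x) : y*cα ≤ x*sα := by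
  apply le_of_sq_le_sq' (mul_nonneg hy0 hc0.le) (mul_nonneg hx0 hs0.le)
  have h1 : (ρ*cα)^2 ≤ x^2 := pow_le_pow_left₀ (mul_nonneg hρ0 hc0.le) hwx 2
  nlinarith [h1, hysq, hpyth, sq_nonneg x, sq_nonneg cα]

lemma helper_tan_inv {x y ρ cα sα : ℝ} (hy0 : 0 ≤ y) (hx0 : 0 ≤ x) (hρ0 : 0 ≤ ρ)
    (hc0 : 0 < cα) (hs0 : 0 < sα) (hpyth : sα^2 + cα^2 = 1)
    (hsum : x^2 + y^2 = ρ^2) (hyc : y*cα ≤ x*sα) : ρ*cα ≤ x := by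
  apply le_of_sq_le_sq' (mul_nonneg hρ0 hc0.le) hx0
  have h2 : (y*cα)^2 ≤ (x*sα)^2 := pow_le_pow_left₀ (mul_nonneg hy0 hc0.le) hyc 2
  nlinarith [h2, hsum, hpyth, sq_nonneg y, sq_nonneg cα]

set_option maxHeartbeats 1000000 in
/-- The main inclusion: each parameter in `[r₀, rmax]` yields a point of the set. -/
lemma arc_mem (hm : (1000:ℝ) ≤ m) (hH : H^2 ≤ 3/(4*(m:ℝ)^2))
    (hr₀0 : 0 ≤ r₀) (hr₀ : r₀ ≤ 1/(2*(m:ℝ)))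
    (hφH : ∀ r, r₀ ≤ r → r ≤ 2 → |φ r| ≤ H)
    (hφc : ∀ r, 1/(2*(m:ℝ)) ≤ r → r ≤ 2 → φ r = c₀)
    (hlow : ∀ r, r₀ ≤ r → r ≤ 2 → (1 - Real.sqrt (1 - φ r^2))^2 ≤ r^2)
    {r : ℝ} (hr : r ∈ Set.Icc r₀ (rmaxOf m c₀)) :
    Pmap φ r ∈ Tset m φ r₀ := by
  obtain ⟨hr1, hr2⟩ := hr
  have hm0 : (0:ℝ) < m := by linarith
  have h2m2 : 1/(2*(m:ℝ)) ≤ 2 := by rw [div_le_iff₀ (by positivity)]; nlinarith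
  have hc₀H : c₀^2 ≤ H^2 := by
    have h := hφH (1/(2*m)) hr₀ h2m2
    rw [hφc (1/(2*m)) le_rfl h2m2] at h
    have := pow_le_pow_left₀ (abs_nonneg c₀) h 2
    rwa [sq_abs] at this
  have hH0 : 0 ≤ H := le_trans (abs_nonneg _) (hφH (1/(2*m)) hr₀ h2m2)
  have hH1 : H^2 ≤ 1 := by
    have : 3/(4*(m:ℝ)^2) ≤ 1 := by rw [div_le_one (by positivity)]; nlinarith
    linarith
  have hc₀1 : c₀^2 ≤ 1 := le_trans hc₀H hH1
  have hrm2 : rmaxOf m c₀ ≤ 2 := rmax_le_two hc₀1 hm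
  have hr2' : r ≤ 2 := le_trans hr2 hrm2
  have hrge : 1/(2*(m:ℝ)) ≤ rmaxOf m c₀ := rmax_ge hm hH hc₀H
  set q := φ r ^ 2 with hq
  have hqH : q ≤ H^2 := by
    have h := pow_le_pow_left₀ (abs_nonneg (φ r)) (hφH r hr1 hr2') 2
    rwa [sq_abs] at h
  have hq1 : q ≤ 1 := le_trans hqH hH1
  have hq0 : 0 ≤ q := sq_nonneg _
  clear_value q
  set ρ := Real.sqrt (1 - q) with hρ
  have hρsq : ρ^2 = 1 - q := Real.sq_sqrt (by linarith)
  have hρ0 : 0 ≤ ρ := Real.sqrt_nonneg _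
  have hρ1 : ρ ≤ 1 := my_sqrt_le_one (by linarith)
  clear_value ρ
  set x := 1 - (q + r^2)/2 with hx
  clear_value x
  have hxρ : x ≤ ρ := by
    have h := hlow r hr1 hr2'
    rw [← hq, ← hρ] at h
    have heq : (1 - ρ)^2 = 1 - 2*ρ + ρ^2 := by ring
    linarith [hρsq]
  have hcos0 := cos_alpha_pos hm
  have hsin0 := sin_alpha_pos hm
  have hcos1 : Real.cos (Real.pi/(2*m)) ≤ 1 := Real.cos_le_one _
  have h1cos := one_sub_cos_alpha hm
  have hr0 : 0 ≤ r := le_trans hr₀0 hr1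
  have hwx : ρ * Real.cos (Real.pi/(2*m)) ≤ x := by
    by_cases hcase : r ≤ 1/(2*(m:ℝ))
    · have hr4 : r^2 ≤ 1/(4*(m:ℝ)^2) := by
        have h1 : r^2 ≤ (1/(2*(m:ℝ)))^2 := pow_le_pow_left₀ hr0 hcase 2
        have h2 : (1/(2*(m:ℝ)))^2 = 1/(4*(m:ℝ)^2) := by field_simp; ring
        linarith
      have hsum : q + r^2 ≤ 1/((m:ℝ)^2) := by
        have h3 := le_trans hqH hH
        have h4 : 3/(4*(m:ℝ)^2) + 1/(4*(m:ℝ)^2) = 1/(m:ℝ)^2 := by field_simp; ring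
        linarith
      have h5 : 1/((m:ℝ)^2) = 2 * (1/(2*(m:ℝ)^2)) := by ring
      have hxc : Real.cos (Real.pi/(2*m)) ≤ x := by
        rw [hx]; linarith
      have h6 := mul_le_mul_of_nonneg_right hρ1 (le_of_lt hcos0)
      rw [one_mul] at h6
      linarith
    · push_neg at hcase
      have hφr : φ r = c₀ := hφc r (le_of_lt hcase) hr2'
      have hqc : q = c₀^2 := by rw [hq, hφr]
      have hsq := rmax_sq (m := m) hc₀1
      have hrr : r^2 ≤ (rmaxOf m c₀)^2 := pow_le_pow_left₀ hr0 hr2 2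
      rw [hsq] at hrr
      have hρc : ρ = Real.sqrt (1 - c₀^2) := by rw [hρ, hqc]
      rw [hρc, hx, hqc]
      linarith
  have hx0 : 0 ≤ x := le_trans (mul_nonneg hρ0 (le_of_lt hcos0)) hwx
  have hyarg : 0 ≤ (1 - q) - x^2 := by
    have h1 : 0 ≤ (ρ - x)*(ρ + x) := mul_nonneg (by linarith) (by linarith)
    have h2 : (ρ - x)*(ρ + x) = ρ^2 - x^2 := by ring
    linarith [hρsq]
  set y := Real.sqrt ((1-q) - x^2) with hy
  have hysq : y^2 = (1-q) - x^2 := Real.sq_sqrt hyarg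
  have hy0 : 0 ≤ y := Real.sqrt_nonneg _
  clear_value y
  have hdist : (x-1)^2 + y^2 = r^2 := by rw [hysq, hx]; ring
  have hsd : Real.sqrt ((x-1)^2 + y^2) = r := by rw [hdist]; exact Real.sqrt_sq hr0
  have hPxy : Pmap φ r = ![x, y, φ r] := by
    unfold Pmap
    rw [vec3_eq_iff']
    refine ⟨by rw [hx, hq], by rw [hy, hx, hq], rfl⟩
  simp only [Tset, Set.mem_setOf_eq]
  refine ⟨⟨x, y, ?_, ?_, ?_⟩, ?_, ?_⟩
  · simp only [wedge, Set.mem_setOf_eq]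
    refine ⟨by linarith [hysq], hx0, ?_⟩
    rw [abs_of_nonneg hy0, Real.tan_eq_sin_div_cos, ← mul_div_assoc]
    rw [le_div_iff₀ hcos0]
    exact helper_tan hy0 hx0 hρ0 hcos0 hsin0 (Real.sin_sq_add_cos_sq _)
      (by linarith [hysq, hρsq]) hwx
  · rw [hdist]; exact pow_le_pow_left₀ hr₀0 hr1 2
  · rw [hsd]; exact hPxy
  · exact norm_vec3_eq_one hPxy (by rw [← hq]; linarith [hysq])
  · rw [hPxy]
    show (0:ℝ) ≤ y
    exact hy0

set_option maxHeartbeats 1000000 in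
lemma arc_sub (hm : (1000:ℝ) ≤ m) (hH : H^2 ≤ 3/(4*(m:ℝ)^2))
    (hr₀0 : 0 ≤ r₀) (hr₀ : r₀ ≤ 1/(2*(m:ℝ)))
    (hφH : ∀ r, r₀ ≤ r → r ≤ 2 → |φ r| ≤ H)
    (hφc : ∀ r, 1/(2*(m:ℝ)) ≤ r → r ≤ 2 → φ r = c₀) :
    Tset m φ r₀ ⊆ Pmap φ '' Set.Icc r₀ (rmaxOf m c₀) := by
  rintro p ⟨⟨x, y, hw, hrr, hpeq⟩, hnorm, hy0'⟩
  have hm0 : (0:ℝ) < m := by linarith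
  have h2m2 : 1/(2*(m:ℝ)) ≤ 2 := by rw [div_le_iff₀ (by positivity)]; nlinarith
  have hc₀H : c₀^2 ≤ H^2 := by
    have h := hφH (1/(2*m)) hr₀ h2m2
    rw [hφc (1/(2*m)) le_rfl h2m2] at h
    have := pow_le_pow_left₀ (abs_nonneg c₀) h 2
    rwa [sq_abs] at this
  have hH1 : H^2 ≤ 1 := by
    have h1 : 3/(4*(m:ℝ)^2) ≤ 1 := by rw [div_le_one (by positivity)]; nlinarith
    linarith
  have hHlt1 : H^2 < 1 := by
    have h1 : 3/(4*(m:ℝ)^2) < 1 := by rw [div_lt_one (by positivity)]; nlinarith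
    linarith
  have hc₀1 : c₀^2 ≤ 1 := le_trans hc₀H hH1
  have hrm2 : rmaxOf m c₀ ≤ 2 := rmax_le_two hc₀1 hm
  have hrge : 1/(2*(m:ℝ)) ≤ rmaxOf m c₀ := rmax_ge hm hH hc₀H
  simp only [wedge, Set.mem_setOf_eq] at hw
  obtain ⟨hxy1, hx0, hyx⟩ := hw
  set r := Real.sqrt ((x-1)^2+y^2) with hrdef
  have hr0 : 0 ≤ r := Real.sqrt_nonneg _
  have hrsq : r^2 = (x-1)^2 + y^2 := Real.sq_sqrt (by positivity)
  clear_value r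
  have hy0 : 0 ≤ y := by
    rw [hpeq] at hy0'
    exact hy0'
  have hnorm1 : x^2 + y^2 + φ r^2 = 1 := by
    rw [toE3 hpeq] at hnorm
    exact (norm_eq_one_iff rfl).1 hnorm
  have hr1 : r₀ ≤ r := le_of_sq_le_sq' hr₀0 hr0 (by rw [hrsq]; exact hrr)
  have hexpand : (x-1)^2 = x^2 - 2*x + 1 := by ring
  have hr2' : r ≤ 2 := by
    apply le_of_sq_le_sq' hr0 (by norm_num)
    have h1 : r^2 ≤ 2 := by linarith [sq_nonneg (φ r), hrsq, hnorm1]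
    nlinarith
  have hqH : φ r^2 ≤ H^2 := by
    have h := pow_le_pow_left₀ (abs_nonneg (φ r)) (hφH r hr1 hr2') 2
    rwa [sq_abs] at h
  have hcos0 := cos_alpha_pos hm
  have hsin0 := sin_alpha_pos hm
  have hρ0 : 0 ≤ Real.sqrt (1 - φ r^2) := Real.sqrt_nonneg _
  have hρsq : (Real.sqrt (1 - φ r^2))^2 = 1 - φ r^2 :=
    Real.sq_sqrt (by linarith [sq_nonneg x, sq_nonneg y])
  have hρx : Real.sqrt (1 - φ r^2) * Real.cos (Real.pi/(2*m)) ≤ x := by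
    rcases eq_or_lt_of_le hx0 with hx00 | hx00
    · exfalso
      have hy00 : y = 0 := by
        have h1 : |y| ≤ 0 := by
          have h0 : x * Real.tan (Real.pi/(2*m)) = 0 := by rw [← hx00]; ring
          rw [← h0]; exact hyx
        have := abs_nonneg y
        have h2 : |y| = 0 := le_antisymm h1 this
        exact abs_eq_zero.1 h2
      rw [← hx00, hy00] at hnorm1
      have : φ r^2 = 1 := by linarith [hnorm1]
      linarith
    · have hyc : y * Real.cos (Real.pi/(2*m)) ≤ x * Real.sin (Real.pi/(2*m)) := by
        rw [abs_of_nonneg hy0, Real.tan_eq_sin_div_cos, ← mul_div_assoc, le_div_iff₀ hcos0] at hyx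
        exact hyx
      exact helper_tan_inv hy0 (le_of_lt hx00) hρ0 hcos0 hsin0 (Real.sin_sq_add_cos_sq _)
        (by linarith [hρsq]) hyc
  have hrmax : r ≤ rmaxOf m c₀ := by
    by_cases hcase : r ≤ 1/(2*(m:ℝ))
    · exact le_trans hcase hrge
    · push_neg at hcase
      have hφr : φ r = c₀ := hφc r (le_of_lt hcase) hr2'
      have hsq := rmax_sq (m := m) hc₀1
      apply le_of_sq_le_sq' hr0 (show (0:ℝ) ≤ rmaxOf m c₀ from Real.sqrt_nonneg _)
      rw [hsq]
      rw [hφr] at hρx hnorm1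
      have hre : r^2 = 2 - c₀^2 - 2*x := by linarith [hrsq, hnorm1, hexpand]
      linarith
  refine ⟨r, ⟨hr1, hrmax⟩, ?_⟩
  rw [toE3 hpeq]
  have hre : r^2 = 2 - φ r^2 - 2*x := by linarith [hrsq, hnorm1, hexpand]
  have hxcomp : 1 - (φ r^2 + r^2)/2 = x := by linarith
  unfold Pmap
  rw [vec3_eq_iff]
  refine ⟨hxcomp, ?_, rfl⟩
  rw [hxcomp]
  have hyy : (1 - φ r^2) - x^2 = y^2 := by linarith [hnorm1]
  rw [hyy]
  exact Real.sqrt_sq hy0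

lemma arc_eq (hm : (1000:ℝ) ≤ m) (hH : H^2 ≤ 3/(4*(m:ℝ)^2))
    (hr₀0 : 0 ≤ r₀) (hr₀ : r₀ ≤ 1/(2*(m:ℝ)))
    (hφH : ∀ r, r₀ ≤ r → r ≤ 2 → |φ r| ≤ H)
    (hφc : ∀ r, 1/(2*(m:ℝ)) ≤ r → r ≤ 2 → φ r = c₀)
    (hlow : ∀ r, r₀ ≤ r → r ≤ 2 → (1 - Real.sqrt (1 - φ r^2))^2 ≤ r^2) :
    Tset m φ r₀ = Pmap φ '' Set.Icc r₀ (rmaxOf m c₀) := by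
  apply Set.Subset.antisymm
  · exact arc_sub hm hH hr₀0 hr₀ hφH hφc
  · rintro p ⟨r, hrI, rfl⟩
    exact arc_mem hm hH hr₀0 hr₀ hφH hφc hlow hrI

lemma arc_preconn (hm : (1000:ℝ) ≤ m) (hH : H^2 ≤ 3/(4*(m:ℝ)^2))
    (hr₀0 : 0 ≤ r₀) (hr₀ : r₀ ≤ 1/(2*(m:ℝ)))
    (hφH : ∀ r, r₀ ≤ r → r ≤ 2 → |φ r| ≤ H)
    (hφc : ∀ r, 1/(2*(m:ℝ)) ≤ r → r ≤ 2 → φ r = c₀)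
    (hlow : ∀ r, r₀ ≤ r → r ≤ 2 → (1 - Real.sqrt (1 - φ r^2))^2 ≤ r^2)
    (hφcont : ContinuousOn φ (Set.Icc r₀ 2)) :
    IsPreconnected (Tset m φ r₀) := by
  rw [arc_eq hm hH hr₀0 hr₀ hφH hφc hlow]
  have hm0 : (0:ℝ) < m := by linarith
  have h2m2 : 1/(2*(m:ℝ)) ≤ 2 := by rw [div_le_iff₀ (by positivity)]; nlinarith
  have hc₀H : c₀^2 ≤ H^2 := by
    have h := hφH (1/(2*m)) hr₀ h2m2
    rw [hφc (1/(2*m)) le_rfl h2m2] at h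
    have := pow_le_pow_left₀ (abs_nonneg c₀) h 2
    rwa [sq_abs] at this
  have hH1 : H^2 ≤ 1 := by
    have : 3/(4*(m:ℝ)^2) ≤ 1 := by rw [div_le_one (by positivity)]; nlinarith
    linarith
  have hrm2 : rmaxOf m c₀ ≤ 2 := rmax_le_two (le_trans hc₀H hH1) hm
  apply IsPreconnected.image isPreconnected_Icc
  have hsub : Set.Icc r₀ (rmaxOf m c₀) ⊆ Set.Icc r₀ 2 := Set.Icc_subset_Icc_right hrm2
  have hφc' : ContinuousOn φ (Set.Icc r₀ (rmaxOf m c₀)) := hφcont.mono hsub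
  apply ContinuousOn.mono (s := Set.Icc r₀ 2) ?_ hsub
  apply continuousOn_mk3 (fun r => rfl)
  · exact (continuousOn_const.sub (((hφcont.pow 2).add ((continuous_id.pow 2).continuousOn)).div_const 2))
  · apply Real.continuous_sqrt.comp_continuousOn
    apply ContinuousOn.sub
    · exact continuousOn_const.sub (hφcont.pow 2)
    · exact ((continuousOn_const.sub (((hφcont.pow 2).add ((continuous_id.pow 2).continuousOn)).div_const 2)).pow 2)
  · exact hφcont

lemma arc_endpoint (hm : (1000:ℝ) ≤ m) (hH : H^2 ≤ 3/(4*(m:ℝ)^2))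
    (hr₀0 : 0 ≤ r₀) (hr₀ : r₀ ≤ 1/(2*(m:ℝ)))
    (hφH : ∀ r, r₀ ≤ r → r ≤ 2 → |φ r| ≤ H)
    (hφc : ∀ r, 1/(2*(m:ℝ)) ≤ r → r ≤ 2 → φ r = c₀) :
    Pmap φ (rmaxOf m c₀) =
      ![Real.sqrt (1-c₀^2) * Real.cos (Real.pi/(2*m)),
        Real.sqrt (1-c₀^2) * Real.sin (Real.pi/(2*m)), c₀] := by
  have hm0 : (0:ℝ) < m := by linarith
  have h2m2 : 1/(2*(m:ℝ)) ≤ 2 := by rw [div_le_iff₀ (by positivity)]; nlinarith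
  have hc₀H : c₀^2 ≤ H^2 := by
    have h := hφH (1/(2*m)) hr₀ h2m2
    rw [hφc (1/(2*m)) le_rfl h2m2] at h
    have := pow_le_pow_left₀ (abs_nonneg c₀) h 2
    rwa [sq_abs] at this
  have hH1 : H^2 ≤ 1 := by
    have : 3/(4*(m:ℝ)^2) ≤ 1 := by rw [div_le_one (by positivity)]; nlinarith
    linarith
  have hc₀1 : c₀^2 ≤ 1 := le_trans hc₀H hH1
  have hrm2 : rmaxOf m c₀ ≤ 2 := rmax_le_two hc₀1 hm
  have hrge : 1/(2*(m:ℝ)) ≤ rmaxOf m c₀ := rmax_ge hm hH hc₀H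
  have hφr : φ (rmaxOf m c₀) = c₀ := hφc _ hrge hrm2
  have hsq := rmax_sq (m := m) hc₀1
  have hρ0 : 0 ≤ Real.sqrt (1-c₀^2) := Real.sqrt_nonneg _
  have hρsq : (Real.sqrt (1-c₀^2))^2 = 1 - c₀^2 := Real.sq_sqrt (by linarith)
  have hsin0 := sin_alpha_pos hm
  have hxeq : 1 - (c₀^2 + (rmaxOf m c₀)^2)/2
      = Real.sqrt (1-c₀^2) * Real.cos (Real.pi/(2*m)) := by
    rw [hsq]; ring
  unfold Pmap
  rw [hφr, vec3_eq_iff']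
  refine ⟨hxeq, ?_, rfl⟩
  rw [hxeq]
  have hyy : (1 - c₀^2) - (Real.sqrt (1-c₀^2) * Real.cos (Real.pi/(2*m)))^2
      = (Real.sqrt (1-c₀^2) * Real.sin (Real.pi/(2*m)))^2 := by
    have hpyth := Real.sin_sq_add_cos_sq (Real.pi/(2*m))
    nlinarith
  rw [hyy]
  exact Real.sqrt_sq (mul_nonneg hρ0 (le_of_lt hsin0))

end Arc

-- ===== cutoff and profile functions =====

section Cutoff

variable {Ψ : ℝ → ℝ} {m : ℕ} {c ζ ξ : ℝ}

lemma inv20_lt_inv10 (hm0 : (0:ℝ) < m) : (1:ℝ)/(20*m) < 1/(10*m) := by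
  rw [div_lt_div_iff₀ (by positivity) (by positivity)]
  nlinarith

lemma cutA_hi (hΨ0 : ∀ x : ℝ, x ≤ -1 → Ψ x = 0) (hm0 : (0:ℝ) < m) {r : ℝ}
    (hr : 1/(10*(m:ℝ)) ≤ r) : cutoffAB Ψ (1/(10*m)) (1/(20*m)) r = 0 := by
  unfold cutoffAB
  apply hΨ0
  have h1 := inv20_lt_inv10 hm0
  have h2 : (1/(20*(m:ℝ)) - 1/(10*m)) = -((1/(10*(m:ℝ)) - 1/(20*m))) := by ring
  rw [h2, div_neg]
  have h3 : 0 ≤ 6 * (r - 1/(10*(m:ℝ))) / (1/(10*(m:ℝ)) - 1/(20*m)) :=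
    div_nonneg (by linarith) (by linarith)
  linarith

lemma cutA_lo (hΨ1 : ∀ x : ℝ, 1 ≤ x → Ψ x = 1) (hm0 : (0:ℝ) < m) {r : ℝ}
    (hr : r ≤ 1/(20*(m:ℝ))) : cutoffAB Ψ (1/(10*m)) (1/(20*m)) r = 1 := by
  unfold cutoffAB
  apply hΨ1
  have h1 := inv20_lt_inv10 hm0
  have h2 : (1/(20*(m:ℝ)) - 1/(10*m)) = -((1/(10*(m:ℝ)) - 1/(20*m))) := by ring
  have h3 : 6 * (r - 1/(10*(m:ℝ))) = -(6 * (1/(10*(m:ℝ)) - r)) := by ring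
  rw [h2, h3, div_neg, neg_div, neg_neg]
  have h4 : 1 ≤ (1/(10*(m:ℝ)) - r) / (1/(10*(m:ℝ)) - 1/(20*m)) := by
    rw [le_div_iff₀ (by linarith)]
    linarith
  have h5 : (0:ℝ) < 1/(10*(m:ℝ)) - 1/(20*m) := by linarith
  have h6 : 6 * (1/(10*(m:ℝ)) - r) / (1/(10*(m:ℝ)) - 1/(20*m))
      = 6 * ((1/(10*(m:ℝ)) - r) / (1/(10*(m:ℝ)) - 1/(20*m))) := by ring
  rw [h6]
  linarith

lemma cutB_lo (hΨ0 : ∀ x : ℝ, x ≤ -1 → Ψ x = 0) (hm0 : (0:ℝ) < m) {r : ℝ}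
    (hr : r ≤ 1/(20*(m:ℝ))) : cutoffAB Ψ (1/(20*m)) (1/(10*m)) r = 0 := by
  unfold cutoffAB
  apply hΨ0
  have h1 := inv20_lt_inv10 hm0
  have h3 : 6 * (r - 1/(20*(m:ℝ))) / (1/(10*(m:ℝ)) - 1/(20*m)) ≤ 0 :=
    div_nonpos_of_nonpos_of_nonneg (by linarith) (by linarith)
  linarith

lemma cutB_hi (hΨ1 : ∀ x : ℝ, 1 ≤ x → Ψ x = 1) (hm0 : (0:ℝ) < m) {r : ℝ}
    (hr : 1/(10*(m:ℝ)) ≤ r) : cutoffAB Ψ (1/(20*m)) (1/(10*m)) r = 1 := by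
  unfold cutoffAB
  apply hΨ1
  have h1 := inv20_lt_inv10 hm0
  have h4 : 1 ≤ (r - 1/(20*(m:ℝ))) / (1/(10*(m:ℝ)) - 1/(20*m)) := by
    rw [le_div_iff₀ (by linarith)]
    linarith
  have h6 : 6 * (r - 1/(20*(m:ℝ))) / (1/(10*(m:ℝ)) - 1/(20*m))
      = 6 * ((r - 1/(20*(m:ℝ))) / (1/(10*(m:ℝ)) - 1/(20*m))) := by ring
  rw [h6]
  linarith

lemma cut_range (hΨr : ∀ x, Ψ x ∈ Set.Icc (0:ℝ) 1) (a b r : ℝ) :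
    0 ≤ cutoffAB Ψ a b r ∧ cutoffAB Ψ a b r ≤ 1 := by
  unfold cutoffAB
  exact ⟨(hΨr _).1, (hΨr _).2⟩

/-- The profile of `Γ₀` as a function of `r`. -/
def f0 (Ψ : ℝ → ℝ) (m : ℕ) (ζ ξ : ℝ) (r : ℝ) : ℝ :=
  (z0Of m ζ ξ - phiCat (tauOf m ζ) r) * cutoffAB Ψ (1/(10*m)) (1/(20*m)) r

/-- The profile of `Γ₁` as a function of `r`. -/
def f1 (Ψ : ℝ → ℝ) (m : ℕ) (ζ ξ : ℝ) (r : ℝ) : ℝ :=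
  z0Of m ζ ξ + phiCat (tauOf m ζ) r * cutoffAB Ψ (1/(10*m)) (1/(20*m)) r +
    tauOf m ζ * aOf m ζ * cutoffAB Ψ (1/(20*m)) (1/(10*m)) r

lemma phi0_eq (u v : ℝ) : phi0 Ψ m ζ ξ u v = f0 Ψ m ζ ξ (Real.sqrt (u^2 + v^2)) := rfl

lemma phi1_eq (u v : ℝ) : phi1 Ψ m ζ ξ u v = f1 Ψ m ζ ξ (Real.sqrt (u^2 + v^2)) := rfl

lemma phiCat_at_tau (h : mOK m c) (hc : 0 < c) : phiCat (tauOf m ζ) (tauOf m ζ) = 0 := by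
  have ht := h.tau_pos (ζ := ζ) hc
  unfold phiCat
  rw [div_self (ne_of_gt ht), arcosh_one, mul_zero]

lemma f0_at_tau (h : mOK m c) (hc : 0 < c) (hζ : |ζ| ≤ c)
    (hΨ1 : ∀ x : ℝ, 1 ≤ x → Ψ x = 1) :
    f0 Ψ m ζ ξ (tauOf m ζ) = z0Of m ζ ξ := by
  unfold f0
  rw [phiCat_at_tau h hc, cutA_lo hΨ1 (h.m_pos hc) (h.tau_le hc hζ)]
  ring

lemma f1_at_tau (h : mOK m c) (hc : 0 < c) (hζ : |ζ| ≤ c)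
    (hΨ0 : ∀ x : ℝ, x ≤ -1 → Ψ x = 0) :
    f1 Ψ m ζ ξ (tauOf m ζ) = z0Of m ζ ξ := by
  unfold f1
  rw [phiCat_at_tau h hc, cutB_lo hΨ0 (h.m_pos hc) (h.tau_le hc hζ)]
  ring

lemma half_m_ge (h : mOK m c) (hc : 0 < c) : 1/(10*(m:ℝ)) ≤ 1/(2*(m:ℝ)) := by
  have hm0 := h.m_pos hc
  rw [div_le_div_iff₀ (by positivity) (by positivity)]
  nlinarith

lemma f0_far (h : mOK m c) (hc : 0 < c) (hΨ0 : ∀ x : ℝ, x ≤ -1 → Ψ x = 0)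
    {r : ℝ} (hr : 1/(2*(m:ℝ)) ≤ r) : f0 Ψ m ζ ξ r = 0 := by
  unfold f0
  rw [cutA_hi hΨ0 (h.m_pos hc) (le_trans (half_m_ge h hc) hr)]
  ring

lemma f1_far (h : mOK m c) (hc : 0 < c) (hΨ0 : ∀ x : ℝ, x ≤ -1 → Ψ x = 0)
    (hΨ1 : ∀ x : ℝ, 1 ≤ x → Ψ x = 1)
    {r : ℝ} (hr : 1/(2*(m:ℝ)) ≤ r) :
    f1 Ψ m ζ ξ r = z0Of m ζ ξ + tauOf m ζ * aOf m ζ := by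
  unfold f1
  rw [cutA_hi hΨ0 (h.m_pos hc) (le_trans (half_m_ge h hc) hr),
    cutB_hi hΨ1 (h.m_pos hc) (le_trans (half_m_ge h hc) hr)]
  ring

lemma f0_bound (h : mOK m c) (hc : 0 < c) (hζ : |ζ| ≤ c) (hξ : |ξ| ≤ c)
    (hΨr : ∀ x, Ψ x ∈ Set.Icc (0:ℝ) 1) :
    ∀ r, tauOf m ζ ≤ r → r ≤ 2 → |f0 Ψ m ζ ξ r| ≤ 3*(tauOf m ζ * m) := by
  intro r h1 h2
  obtain ⟨hφ1, hφ2⟩ := h.phiCat_le hc hζ r h1 h2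
  have hz1 := h.z0_pos hc hζ hξ
  have hz2 := h.z0_le hc hζ hξ
  obtain ⟨hc1, hc2⟩ := cut_range (Ψ := Ψ) hΨr (1/(10*m)) (1/(20*m)) r
  have ht := h.tau_pos (ζ := ζ) hc
  have hm0 := h.m_pos hc
  unfold f0
  rw [abs_mul, abs_of_nonneg hc1]
  have habs : |z0Of m ζ ξ - phiCat (tauOf m ζ) r| ≤ 2*(tauOf m ζ * m) := by
    rw [abs_le]
    constructor <;> nlinarith
  calc |z0Of m ζ ξ - phiCat (tauOf m ζ) r| * cutoffAB Ψ (1/(10*m)) (1/(20*m)) r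
      ≤ 2*(tauOf m ζ * m) * 1 := by
        apply mul_le_mul habs hc2 hc1 (by nlinarith)
  _ ≤ 3*(tauOf m ζ * m) := by nlinarith

lemma f1_bound (h : mOK m c) (hc : 0 < c) (hζ : |ζ| ≤ c) (hξ : |ξ| ≤ c)
    (hΨr : ∀ x, Ψ x ∈ Set.Icc (0:ℝ) 1) :
    ∀ r, tauOf m ζ ≤ r → r ≤ 2 → |f1 Ψ m ζ ξ r| ≤ 3*(tauOf m ζ * m) := by
  intro r h1 h2
  obtain ⟨hφ1, hφ2⟩ := h.phiCat_le hc hζ r h1 h2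
  have hz1 := h.z0_pos hc hζ hξ
  have hz2 := h.z0_le hc hζ hξ
  obtain ⟨hc1, hc2⟩ := cut_range (Ψ := Ψ) hΨr (1/(10*m)) (1/(20*m)) r
  obtain ⟨hd1, hd2⟩ := cut_range (Ψ := Ψ) hΨr (1/(20*m)) (1/(10*m)) r
  have ht := h.tau_pos (ζ := ζ) hc
  have hm0 := h.m_pos hc
  have ha1 := h.a_pos hc hζ
  have ha2 : tauOf m ζ * aOf m ζ ≤ tauOf m ζ * m := by
    have := h.a_ub hc hζ
    have h3 : -ζ ≤ (m:ℝ)/20 := by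
      have := (abs_le.1 hζ).1
      have := h.c_le hc
      linarith
    have hm1000 := h.m_ge hc
    have h4 : aOf m ζ ≤ (m:ℝ) := by linarith
    nlinarith
  unfold f1
  rw [abs_le]
  constructor
  · nlinarith [mul_nonneg (mul_nonneg (le_of_lt ht) (by linarith : (0:ℝ) ≤ aOf m ζ)) hd1,
      mul_nonneg hφ1 hc1]
  · have e1 : phiCat (tauOf m ζ) r * cutoffAB Ψ (1/(10*m)) (1/(20*m)) r ≤ tauOf m ζ * m := by
      nlinarith
    have e2 : tauOf m ζ * aOf m ζ * cutoffAB Ψ (1/(20*m)) (1/(10*m)) r ≤ tauOf m ζ * m := by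
      nlinarith [mul_nonneg (le_of_lt ht) (by linarith : (0:ℝ) ≤ aOf m ζ)]
    linarith

lemma f0_cont (h : mOK m c) (hc : 0 < c) (hΨc : Continuous Ψ) :
    ContinuousOn (f0 Ψ m ζ ξ) (Set.Icc (tauOf m ζ) 2) := by
  have ht := h.tau_pos (ζ := ζ) hc
  unfold f0
  apply ContinuousOn.mul
  · apply ContinuousOn.sub continuousOn_const
    unfold phiCat
    apply ContinuousOn.mul continuousOn_const
    apply ContinuousOn.comp continuousOn_arcosh
    · exact (continuous_id.div_const _).continuousOn
    · intro r hr
      simp only [Set.mem_setOf_eq]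
      exact (one_le_div ht).2 hr.1
  · apply Continuous.continuousOn
    unfold cutoffAB
    apply hΨc.comp
    continuity

lemma f1_cont (h : mOK m c) (hc : 0 < c) (hΨc : Continuous Ψ) :
    ContinuousOn (f1 Ψ m ζ ξ) (Set.Icc (tauOf m ζ) 2) := by
  have ht := h.tau_pos (ζ := ζ) hc
  unfold f1
  apply ContinuousOn.add
  apply ContinuousOn.add continuousOn_const
  · apply ContinuousOn.mul
    · unfold phiCat
      apply ContinuousOn.mul continuousOn_const
      apply ContinuousOn.comp continuousOn_arcosh
      · exact (continuous_id.div_const _).continuousOn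
      · intro r hr
        simp only [Set.mem_setOf_eq]
        exact (one_le_div ht).2 hr.1
    · apply Continuous.continuousOn
      unfold cutoffAB
      apply hΨc.comp
      continuity
  · apply Continuous.continuousOn
    unfold cutoffAB
    apply Continuous.mul continuous_const
    apply hΨc.comp
    continuity

end Cutoff

-- ===== instantiation of the arc machinery =====

/-- Total height `h = z₀ + τa`. -/
def hhOf (m : ℕ) (ζ ξ : ℝ) : ℝ := z0Of m ζ ξ + tauOf m ζ * aOf m ζ

/-- Inner radius for the bottom disc: `1 - √(1-h²)`. -/
def rnegOf (m : ℕ) (ζ ξ : ℝ) : ℝ := 1 - Real.sqrt (1 - (hhOf m ζ ξ)^2)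

section Inst

variable {Ψ : ℝ → ℝ} {m : ℕ} {c ζ ξ : ℝ}

lemma mOK.H_inst (h : mOK m c) (hc : 0 < c) (hζ : |ζ| ≤ c) :
    (3*(tauOf m ζ * m))^2 ≤ 3/(4*(m:ℝ)^2) := by
  have hm0 := h.m_pos hc
  have ht := h.tau_pos (ζ := ζ) hc
  have key := pow_le_pow_left₀ (by positivity : (0:ℝ) ≤ tauOf m ζ * (m:ℝ)^2)
    (h.tau_m2 hc hζ) 2
  rw [le_div_iff₀ (by positivity)]
  have e : (3*(tauOf m ζ*(m:ℝ)))^2 * (4*(m:ℝ)^2) = 36 * (tauOf m ζ*(m:ℝ)^2)^2 := by ring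
  rw [e]
  nlinarith [key]

lemma mOK.H_le_tau (h : mOK m c) (hc : 0 < c) (hζ : |ζ| ≤ c) :
    (3*(tauOf m ζ * m))^2 ≤ tauOf m ζ := by
  have hm0 := h.m_pos hc
  have ht := h.tau_pos (ζ := ζ) hc
  have h1 := h.tau_m2 hc hζ
  have e : (3*(tauOf m ζ*(m:ℝ)))^2 = 9 * (tauOf m ζ * (tauOf m ζ * (m:ℝ)^2)) := by ring
  rw [e]
  nlinarith

lemma mOK.tau_le_half (h : mOK m c) (hc : 0 < c) (hζ : |ζ| ≤ c) :
    tauOf m ζ ≤ 1/(2*(m:ℝ)) := by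
  have hm0 := h.m_pos hc
  have h1 := h.tau_le hc hζ
  have h2 : (1:ℝ)/(20*m) ≤ 1/(2*m) := by
    rw [div_le_div_iff₀ (by positivity) (by positivity)]
    nlinarith
  linarith

lemma mOK.hh_le_H (h : mOK m c) (hc : 0 < c) (hζ : |ζ| ≤ c) (hξ : |ξ| ≤ c) :
    |hhOf m ζ ξ| ≤ 3*(tauOf m ζ * m) ∧ |-(hhOf m ζ ξ)| ≤ 3*(tauOf m ζ * m) := by
  have h1 := h.hh_pos hc hζ hξ
  have h2 := h.hh_le hc hζ hξ
  have ht := h.tau_pos (ζ := ζ) hc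
  have hm0 := h.m_pos hc
  unfold hhOf
  rw [abs_neg, abs_of_pos h1]
  constructor <;> nlinarith

lemma hlow_pt {v r t H : ℝ} (hv : |v| ≤ H) (hH1 : H^2 ≤ 1) (hH2 : H^2 ≤ t)
    (ht : t ≤ r) (h0 : 0 ≤ t) : (1 - Real.sqrt (1 - v^2))^2 ≤ r^2 := by
  have hv2 : v^2 ≤ H^2 := by
    have := pow_le_pow_left₀ (abs_nonneg v) hv 2
    rwa [sq_abs] at this
  have hq1 : v^2 ≤ 1 := le_trans hv2 hH1
  have h1 : (1 - v^2)^2 ≤ (1 - v^2) := by nlinarith [sq_nonneg v]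
  have h2 : 1 - v^2 ≤ Real.sqrt (1 - v^2) := by
    have h3 := Real.sqrt_le_sqrt h1
    rwa [Real.sqrt_sq (by linarith)] at h3
  have h4 : Real.sqrt (1 - v^2) ≤ 1 := my_sqrt_le_one (by nlinarith [sq_nonneg v])
  have h5 : 0 ≤ 1 - Real.sqrt (1 - v^2) := by linarith
  have h6 : 1 - Real.sqrt (1 - v^2) ≤ r := by nlinarith
  exact pow_le_pow_left₀ h5 h6 2

-- named pieces
def Tpos0 (Ψ : ℝ → ℝ) (m : ℕ) (ζ ξ : ℝ) : Set E3 := Tset m (f0 Ψ m ζ ξ) (tauOf m ζ)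
def Tpos1 (Ψ : ℝ → ℝ) (m : ℕ) (ζ ξ : ℝ) : Set E3 := Tset m (f1 Ψ m ζ ξ) (tauOf m ζ)
def TnegS (m : ℕ) (ζ ξ : ℝ) : Set E3 :=
  Tset m (fun _ => -(hhOf m ζ ξ)) (rnegOf m ζ ξ)

-- bundled instance hypotheses for f0
lemma inst_f0 (h : mOK m c) (hc : 0 < c) (hζ : |ζ| ≤ c) (hξ : |ξ| ≤ c)
    (hΨ0 : ∀ x : ℝ, x ≤ -1 → Ψ x = 0) (hΨr : ∀ x, Ψ x ∈ Set.Icc (0:ℝ) 1) :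
    (1000:ℝ) ≤ m ∧ (3*(tauOf m ζ * m))^2 ≤ 3/(4*(m:ℝ)^2) ∧
    0 ≤ tauOf m ζ ∧ tauOf m ζ ≤ 1/(2*(m:ℝ)) ∧
    (∀ r, tauOf m ζ ≤ r → r ≤ 2 → |f0 Ψ m ζ ξ r| ≤ 3*(tauOf m ζ * m)) ∧
    (∀ r, 1/(2*(m:ℝ)) ≤ r → r ≤ 2 → f0 Ψ m ζ ξ r = 0) ∧
    (∀ r, tauOf m ζ ≤ r → r ≤ 2 → (1 - Real.sqrt (1 - f0 Ψ m ζ ξ r^2))^2 ≤ r^2) := by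
  have hm := h.m_ge hc
  have ht := h.tau_pos (ζ := ζ) hc
  have hH1 : (3*(tauOf m ζ * m))^2 ≤ 1 := by
    have h1 := h.H_inst hc hζ
    have hm0 := h.m_pos hc
    have : 3/(4*(m:ℝ)^2) ≤ 1 := by rw [div_le_one (by positivity)]; nlinarith
    linarith
  refine ⟨hm, h.H_inst hc hζ, le_of_lt ht, h.tau_le_half hc hζ,
    f0_bound h hc hζ hξ hΨr, fun r h1 h2 => f0_far h hc hΨ0 h1, ?_⟩
  intro r h1 h2
  exact hlow_pt (f0_bound h hc hζ hξ hΨr r h1 h2) hH1 (h.H_le_tau hc hζ) h1 (le_of_lt ht)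

lemma inst_f1 (h : mOK m c) (hc : 0 < c) (hζ : |ζ| ≤ c) (hξ : |ξ| ≤ c)
    (hΨ0 : ∀ x : ℝ, x ≤ -1 → Ψ x = 0) (hΨ1 : ∀ x : ℝ, 1 ≤ x → Ψ x = 1)
    (hΨr : ∀ x, Ψ x ∈ Set.Icc (0:ℝ) 1) :
    (∀ r, tauOf m ζ ≤ r → r ≤ 2 → |f1 Ψ m ζ ξ r| ≤ 3*(tauOf m ζ * m)) ∧
    (∀ r, 1/(2*(m:ℝ)) ≤ r → r ≤ 2 → f1 Ψ m ζ ξ r = hhOf m ζ ξ) ∧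
    (∀ r, tauOf m ζ ≤ r → r ≤ 2 → (1 - Real.sqrt (1 - f1 Ψ m ζ ξ r^2))^2 ≤ r^2) := by
  have ht := h.tau_pos (ζ := ζ) hc
  have hH1 : (3*(tauOf m ζ * m))^2 ≤ 1 := by
    have h1 := h.H_inst hc hζ
    have hm0 := h.m_pos hc
    have hm1000 := h.m_ge hc
    have : 3/(4*(m:ℝ)^2) ≤ 1 := by rw [div_le_one (by positivity)]; nlinarith
    linarith
  refine ⟨f1_bound h hc hζ hξ hΨr, fun r h1 h2 => f1_far h hc hΨ0 hΨ1 h1, ?_⟩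
  intro r h1 h2
  exact hlow_pt (f1_bound h hc hζ hξ hΨr r h1 h2) hH1 (h.H_le_tau hc hζ) h1 (le_of_lt ht)

lemma rneg_facts (h : mOK m c) (hc : 0 < c) (hζ : |ζ| ≤ c) (hξ : |ξ| ≤ c) :
    0 ≤ rnegOf m ζ ξ ∧ rnegOf m ζ ξ ≤ 1/(2*(m:ℝ)) ∧
    (∀ r, rnegOf m ζ ξ ≤ r → r ≤ 2 →
      (1 - Real.sqrt (1 - (-(hhOf m ζ ξ))^2))^2 ≤ r^2) := by
  have hm0 := h.m_pos hc
  have hm := h.m_ge hc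
  have hhH := (h.hh_le_H hc hζ hξ).1
  have hH2 : (3*(tauOf m ζ * m))^2 ≤ 3/(4*(m:ℝ)^2) := h.H_inst hc hζ
  have hhsq : (hhOf m ζ ξ)^2 ≤ 3/(4*(m:ℝ)^2) := by
    have := pow_le_pow_left₀ (abs_nonneg (hhOf m ζ ξ)) hhH 2
    rw [sq_abs] at this
    linarith
  have hhsq1 : (hhOf m ζ ξ)^2 ≤ 1 := by
    have : 3/(4*(m:ℝ)^2) ≤ 1 := by rw [div_le_one (by positivity)]; nlinarith
    linarith
  have hs0 : 0 ≤ Real.sqrt (1 - (hhOf m ζ ξ)^2) := Real.sqrt_nonneg _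
  have hs1 : Real.sqrt (1 - (hhOf m ζ ξ)^2) ≤ 1 := my_sqrt_le_one (by nlinarith [sq_nonneg (hhOf m ζ ξ)])
  have hssq : (Real.sqrt (1 - (hhOf m ζ ξ)^2))^2 = 1 - (hhOf m ζ ξ)^2 :=
    Real.sq_sqrt (by linarith)
  have h0 : 0 ≤ rnegOf m ζ ξ := by unfold rnegOf; linarith
  refine ⟨h0, ?_, ?_⟩
  · unfold rnegOf
    have key : 1 - Real.sqrt (1 - (hhOf m ζ ξ)^2) ≤ (hhOf m ζ ξ)^2 := by nlinarith
    have h2 : 3/(4*(m:ℝ)^2) ≤ 1/(2*(m:ℝ)) := by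
      rw [div_le_div_iff₀ (by positivity) (by positivity)]
      nlinarith
    linarith
  · intro r h1 h2
    have e : (1 - Real.sqrt (1 - (-(hhOf m ζ ξ))^2))^2 = (rnegOf m ζ ξ)^2 := by
      rw [neg_sq]; rfl
    rw [e]
    exact pow_le_pow_left₀ h0 h1 2

end Inst

-- ===== the pieces and their gluing =====

section Glue

variable {Ψ : ℝ → ℝ} {m : ℕ} {c ζ ξ : ℝ}

lemma gamma0_eq :
    Gamma0 Ψ m ζ ξ ∩ {p : E3 | ‖p‖ = 1} ∩ {p : E3 | 0 ≤ p 1} = Tpos0 Ψ m ζ ξ := by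
  ext p
  simp only [Gamma0, Tpos0, Tset, Set.mem_inter_iff, Set.mem_setOf_eq]
  constructor
  · rintro ⟨⟨⟨hle, hex⟩, hn⟩, hy⟩
    exact ⟨hex, hn, hy⟩
  · rintro ⟨hex, hn, hy⟩
    exact ⟨⟨⟨le_of_eq hn, hex⟩, hn⟩, hy⟩

lemma gamma1_eq :
    Gamma1 Ψ m ζ ξ ∩ {p : E3 | ‖p‖ = 1} ∩ {p : E3 | 0 ≤ p 1} = Tpos1 Ψ m ζ ξ := by
  ext p
  simp only [Gamma1, Tpos1, Tset, Set.mem_inter_iff, Set.mem_setOf_eq]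
  constructor
  · rintro ⟨⟨⟨hle, hex⟩, hn⟩, hy⟩
    exact ⟨hex, hn, hy⟩
  · rintro ⟨hex, hn, hy⟩
    exact ⟨⟨⟨le_of_eq hn, hex⟩, hn⟩, hy⟩

lemma zneg_eq : -z0Of m ζ ξ - tauOf m ζ * aOf m ζ = -(hhOf m ζ ξ) := by
  unfold hhOf; ring

lemma gammaNeg_eq (h : mOK m c) (hc : 0 < c) (hζ : |ζ| ≤ c) (hξ : |ξ| ≤ c) :
    GammaNeg m ζ ξ ∩ {p : E3 | ‖p‖ = 1} ∩ {p : E3 | 0 ≤ p 1} = TnegS m ζ ξ := by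
  have hm0 := h.m_pos hc
  have hhH := (h.hh_le_H hc hζ hξ).1
  have hhsq1 : (hhOf m ζ ξ)^2 ≤ 1 := by
    have h2 := pow_le_pow_left₀ (abs_nonneg (hhOf m ζ ξ)) hhH 2
    rw [sq_abs] at h2
    have h3 := h.H_inst hc hζ
    have hm1000 := h.m_ge hc
    have : 3/(4*(m:ℝ)^2) ≤ 1 := by rw [div_le_one (by positivity)]; nlinarith
    linarith
  have hs0 : 0 ≤ Real.sqrt (1 - (hhOf m ζ ξ)^2) := Real.sqrt_nonneg _
  have hssq : (Real.sqrt (1 - (hhOf m ζ ξ)^2))^2 = 1 - (hhOf m ζ ξ)^2 :=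
    Real.sq_sqrt (by linarith)
  ext p
  simp only [GammaNeg, TnegS, Tset, Set.mem_inter_iff, Set.mem_setOf_eq]
  constructor
  · rintro ⟨⟨⟨hle, x, y, hw, hpeq⟩, hn⟩, hy⟩
    rw [zneg_eq] at hpeq
    have hx0 : 0 ≤ x := by
      have := hw
      simp only [wedge, Set.mem_setOf_eq] at this
      exact this.2.1
    have hnorm1 : x^2 + y^2 + (-(hhOf m ζ ξ))^2 = 1 := by
      rw [toE3 hpeq] at hn
      exact (norm_eq_one_iff rfl).1 hn
    rw [neg_sq] at hnorm1
    have hxle : x ≤ Real.sqrt (1 - (hhOf m ζ ξ)^2) := by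
      apply le_of_sq_le_sq' hx0 hs0
      rw [hssq]
      nlinarith [sq_nonneg y]
    refine ⟨⟨x, y, hw, ?_, hpeq⟩, hn, hy⟩
    have e1 : (rnegOf m ζ ξ)^2
        = 2 - (hhOf m ζ ξ)^2 - 2*Real.sqrt (1 - (hhOf m ζ ξ)^2) := by
      unfold rnegOf; nlinarith [hssq]
    have e2 : (x-1)^2 + y^2 = 2 - (hhOf m ζ ξ)^2 - 2*x := by nlinarith [hnorm1]
    linarith
  · rintro ⟨⟨x, y, hw, hr, hpeq⟩, hn, hy⟩
    refine ⟨⟨⟨le_of_eq hn, x, y, hw, ?_⟩, hn⟩, hy⟩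
    rw [zneg_eq]
    exact hpeq

-- the positive-side curve
lemma wplus_mem (h : mOK m c) (hc : 0 < c) (hζ : |ζ| ≤ c) (hξ : |ξ| ≤ c)
    (hΨ0 : ∀ x : ℝ, x ≤ -1 → Ψ x = 0) (hΨ1 : ∀ x : ℝ, 1 ≤ x → Ψ x = 1)
    (hΨr : ∀ x, Ψ x ∈ Set.Icc (0:ℝ) 1) :
    Pmap (f0 Ψ m ζ ξ) (tauOf m ζ) ∈ Tpos0 Ψ m ζ ξ ∧
    Pmap (f0 Ψ m ζ ξ) (tauOf m ζ) ∈ Tpos1 Ψ m ζ ξ := by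
  obtain ⟨hm, hH, ht0, hth, hb0, hf0, hl0⟩ := inst_f0 h hc hζ hξ hΨ0 hΨr
  obtain ⟨hb1, hf1, hl1⟩ := inst_f1 h hc hζ hξ hΨ0 hΨ1 hΨr
  have hicc0 : tauOf m ζ ∈ Set.Icc (tauOf m ζ) (rmaxOf m 0) := by
    refine ⟨le_rfl, le_trans hth (rmax_ge hm hH ?_)⟩
    simp [sq_nonneg]
  have hicc1 : tauOf m ζ ∈ Set.Icc (tauOf m ζ) (rmaxOf m (hhOf m ζ ξ)) := by
    refine ⟨le_rfl, le_trans hth (rmax_ge hm hH ?_)⟩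
    have h2 := pow_le_pow_left₀ (abs_nonneg (hhOf m ζ ξ)) ((h.hh_le_H hc hζ hξ).1) 2
    rwa [sq_abs] at h2
  constructor
  · exact arc_mem hm hH ht0 hth hb0 hf0 hl0 hicc0
  · have e : Pmap (f0 Ψ m ζ ξ) (tauOf m ζ) = Pmap (f1 Ψ m ζ ξ) (tauOf m ζ) :=
      Pmap_congr (by rw [f0_at_tau h hc hζ hΨ1, f1_at_tau h hc hζ hΨ0])
    rw [e]
    exact arc_mem hm hH ht0 hth hb1 hf1 hl1 hicc1

lemma cpos_preconn (h : mOK m c) (hc : 0 < c) (hζ : |ζ| ≤ c) (hξ : |ξ| ≤ c)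
    (hΨ0 : ∀ x : ℝ, x ≤ -1 → Ψ x = 0) (hΨ1 : ∀ x : ℝ, 1 ≤ x → Ψ x = 1)
    (hΨr : ∀ x, Ψ x ∈ Set.Icc (0:ℝ) 1) (hΨc : Continuous Ψ) :
    IsPreconnected (Tpos0 Ψ m ζ ξ ∪ Tpos1 Ψ m ζ ξ) := by
  obtain ⟨hm, hH, ht0, hth, hb0, hf0, hl0⟩ := inst_f0 h hc hζ hξ hΨ0 hΨr
  obtain ⟨hb1, hf1, hl1⟩ := inst_f1 h hc hζ hξ hΨ0 hΨ1 hΨr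
  obtain ⟨hw0, hw1⟩ := wplus_mem h hc hζ hξ hΨ0 hΨ1 hΨr
  exact IsPreconnected.union _ hw0 hw1
    (arc_preconn hm hH ht0 hth hb0 hf0 hl0 (f0_cont h hc hΨc))
    (arc_preconn hm hH ht0 hth hb1 hf1 hl1 (f1_cont h hc hΨc))

lemma tneg_preconn (h : mOK m c) (hc : 0 < c) (hζ : |ζ| ≤ c) (hξ : |ξ| ≤ c) :
    IsPreconnected (TnegS m ζ ξ) := by
  obtain ⟨h0, hhalf, hlow⟩ := rneg_facts h hc hζ hξ
  have hm := h.m_ge hc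
  exact arc_preconn hm (h.H_inst hc hζ) h0 hhalf
    (fun r h1 h2 => (h.hh_le_H hc hζ hξ).2)
    (fun r h1 h2 => rfl) hlow continuousOn_const

lemma Pneg_eq (h : mOK m c) (hc : 0 < c) (hζ : |ζ| ≤ c) (hξ : |ξ| ≤ c) :
    Pmap (fun _ => -(hhOf m ζ ξ)) (rnegOf m ζ ξ)
      = ![Real.sqrt (1 - (hhOf m ζ ξ)^2), 0, -(hhOf m ζ ξ)] := by
  have hm0 := h.m_pos hc
  have hhH := (h.hh_le_H hc hζ hξ).1
  have hhsq1 : (hhOf m ζ ξ)^2 ≤ 1 := by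
    have h2 := pow_le_pow_left₀ (abs_nonneg (hhOf m ζ ξ)) hhH 2
    rw [sq_abs] at h2
    have h3 := h.H_inst hc hζ
    have hm1000 := h.m_ge hc
    have : 3/(4*(m:ℝ)^2) ≤ 1 := by rw [div_le_one (by positivity)]; nlinarith
    linarith
  have hssq : (Real.sqrt (1 - (hhOf m ζ ξ)^2))^2 = 1 - (hhOf m ζ ξ)^2 :=
    Real.sq_sqrt (by linarith)
  have hx : 1 - ((-(hhOf m ζ ξ))^2 + (rnegOf m ζ ξ)^2)/2
      = Real.sqrt (1 - (hhOf m ζ ξ)^2) := by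
    unfold rnegOf
    rw [neg_sq]
    nlinarith [hssq]
  unfold Pmap
  rw [vec3_eq_iff']
  refine ⟨hx, ?_, rfl⟩
  rw [hx]
  have e : (1 - (-(hhOf m ζ ξ))^2) - (Real.sqrt (1 - (hhOf m ζ ξ)^2))^2 = 0 := by
    rw [neg_sq, hssq]; ring
  rw [e, Real.sqrt_zero]

end Glue

-- ===== symmetries of the pieces =====

section Sym

variable {Ψ : ℝ → ℝ} {m : ℕ} {c ζ ξ : ℝ}

lemma reflY_vec (a b c' : ℝ) : reflY (WithLp.toLp 2 ![a, b, c']) = WithLp.toLp 2 ![a, -b, c'] := rfl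

lemma phi0_neg (u v : ℝ) : phi0 Ψ m ζ ξ u (-v) = phi0 Ψ m ζ ξ u v := by
  rw [phi0_eq, phi0_eq, neg_sq]

lemma phi1_neg (u v : ℝ) : phi1 Ψ m ζ ξ u (-v) = phi1 Ψ m ζ ξ u v := by
  rw [phi1_eq, phi1_eq, neg_sq]

lemma wedge_neg {x y : ℝ} (hw : (x, y) ∈ wedge m) : (x, -y) ∈ wedge m := by
  simp only [wedge, Set.mem_setOf_eq] at hw ⊢
  obtain ⟨h1, h2, h3⟩ := hw
  refine ⟨by rw [neg_sq]; exact h1, h2, by rw [abs_neg]; exact h3⟩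

/-- `Aset` is the fundamental piece `Γ₋₁ ∪ Γ₀ ∪ Γ₁`. -/
def Aset (Ψ : ℝ → ℝ) (m : ℕ) (ζ ξ : ℝ) : Set E3 :=
  GammaNeg m ζ ξ ∪ Gamma0 Ψ m ζ ξ ∪ Gamma1 Ψ m ζ ξ

lemma reflY_Aset {p : E3} (hp : p ∈ Aset Ψ m ζ ξ) : reflY p ∈ Aset Ψ m ζ ξ := by
  rcases hp with (hp | hp) | hp
  · left; left
    obtain ⟨hle, x, y, hw, hpeq⟩ := hp
    refine ⟨by rw [norm_reflY]; exact hle, x, -y, wedge_neg hw, ?_⟩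
    rw [toE3 hpeq, reflY_vec]
  · left; right
    obtain ⟨hle, x, y, hw, hr, hpeq⟩ := hp
    refine ⟨by rw [norm_reflY]; exact hle, x, -y, wedge_neg hw, by rw [neg_sq]; exact hr, ?_⟩
    rw [toE3 hpeq, reflY_vec, phi0_neg]
  · right
    obtain ⟨hle, x, y, hw, hr, hpeq⟩ := hp
    refine ⟨by rw [norm_reflY]; exact hle, x, -y, wedge_neg hw, by rw [neg_sq]; exact hr, ?_⟩
    rw [toE3 hpeq, reflY_vec, phi1_neg]

def CposS (Ψ : ℝ → ℝ) (m : ℕ) (ζ ξ : ℝ) : Set E3 := Tpos0 Ψ m ζ ξ ∪ Tpos1 Ψ m ζ ξ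
def CnegS (Ψ : ℝ → ℝ) (m : ℕ) (ζ ξ : ℝ) : Set E3 := reflY '' CposS Ψ m ζ ξ
def NsetS (m : ℕ) (ζ ξ : ℝ) : Set E3 := TnegS m ζ ξ ∪ reflY '' TnegS m ζ ξ
def D0S (Ψ : ℝ → ℝ) (m : ℕ) (ζ ξ : ℝ) : Set E3 :=
  (NsetS m ζ ξ ∪ RotK m 1 '' CnegS Ψ m ζ ξ) ∪ CposS Ψ m ζ ξ
def WS (Ψ : ℝ → ℝ) (m : ℕ) (ζ ξ : ℝ) (k : ℤ) : Set E3 := RotK m k '' D0S Ψ m ζ ξ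

lemma reflY_reflY (p : E3) : reflY (reflY p) = p := congrFun reflY_comp_reflY p

lemma cpos_cover (h : mOK m c) (hc : 0 < c) (hζ : |ζ| ≤ c) (hξ : |ξ| ≤ c) :
    (Gamma0 Ψ m ζ ξ ∪ Gamma1 Ψ m ζ ξ) ∩ {p : E3 | ‖p‖ = 1}
      = CposS Ψ m ζ ξ ∪ CnegS Ψ m ζ ξ := by
  have key : ∀ p : E3, p ∈ (Gamma0 Ψ m ζ ξ ∪ Gamma1 Ψ m ζ ξ) → ‖p‖ = 1 → 0 ≤ p 1 →
      p ∈ CposS Ψ m ζ ξ := by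
    intro p hp hn hy
    rcases hp with hp | hp
    · exact Or.inl ((Set.ext_iff.1 (gamma0_eq (Ψ := Ψ) (m := m) (ζ := ζ) (ξ := ξ)) p).1
        ⟨⟨hp, hn⟩, hy⟩)
    · exact Or.inr ((Set.ext_iff.1 (gamma1_eq (Ψ := Ψ) (m := m) (ζ := ζ) (ξ := ξ)) p).1
        ⟨⟨hp, hn⟩, hy⟩)
  have mem_back : ∀ p : E3, p ∈ CposS Ψ m ζ ξ →
      p ∈ (Gamma0 Ψ m ζ ξ ∪ Gamma1 Ψ m ζ ξ) ∩ {p : E3 | ‖p‖ = 1} := by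
    intro p hp
    rcases hp with hp | hp
    · have := (Set.ext_iff.1 (gamma0_eq (Ψ := Ψ) (m := m) (ζ := ζ) (ξ := ξ)) p).2 hp
      exact ⟨Or.inl this.1.1, this.1.2⟩
    · have := (Set.ext_iff.1 (gamma1_eq (Ψ := Ψ) (m := m) (ζ := ζ) (ξ := ξ)) p).2 hp
      exact ⟨Or.inr this.1.1, this.1.2⟩
  have reflY_C : ∀ p : E3, p ∈ Gamma0 Ψ m ζ ξ ∪ Gamma1 Ψ m ζ ξ →
      reflY p ∈ Gamma0 Ψ m ζ ξ ∪ Gamma1 Ψ m ζ ξ := by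
    intro p hp
    rcases hp with hp | hp
    · left
      obtain ⟨hle, x, y, hw, hr, hpeq⟩ := hp
      refine ⟨by rw [norm_reflY]; exact hle, x, -y, wedge_neg hw, by rw [neg_sq]; exact hr, ?_⟩
      rw [toE3 hpeq, reflY_vec, phi0_neg]
    · right
      obtain ⟨hle, x, y, hw, hr, hpeq⟩ := hp
      refine ⟨by rw [norm_reflY]; exact hle, x, -y, wedge_neg hw, by rw [neg_sq]; exact hr, ?_⟩
      rw [toE3 hpeq, reflY_vec, phi1_neg]
  apply Set.Subset.antisymm
  · rintro p ⟨hp, hn⟩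
    rcases le_total 0 (p 1) with hy | hy
    · exact Or.inl (key p hp hn hy)
    · right
      refine ⟨reflY p, key (reflY p) (reflY_C p hp) (by rw [norm_reflY]; exact hn) ?_,
        reflY_reflY p⟩
      show (0:ℝ) ≤ -(p 1)
      linarith
  · rintro p (hp | ⟨q, hq, rfl⟩)
    · exact mem_back p hp
    · obtain ⟨hq1, hq2⟩ := mem_back q hq
      exact ⟨reflY_C q hq1, by show ‖reflY q‖ = 1; rw [norm_reflY]; exact hq2⟩

lemma nset_cover (h : mOK m c) (hc : 0 < c) (hζ : |ζ| ≤ c) (hξ : |ξ| ≤ c) :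
    GammaNeg m ζ ξ ∩ {p : E3 | ‖p‖ = 1} = NsetS m ζ ξ := by
  have key : ∀ p : E3, p ∈ GammaNeg m ζ ξ → ‖p‖ = 1 → 0 ≤ p 1 → p ∈ TnegS m ζ ξ := by
    intro p hp hn hy
    exact (Set.ext_iff.1 (gammaNeg_eq h hc hζ hξ) p).1 ⟨⟨hp, hn⟩, hy⟩
  have mem_back : ∀ p : E3, p ∈ TnegS m ζ ξ →
      p ∈ GammaNeg m ζ ξ ∩ {p : E3 | ‖p‖ = 1} := by
    intro p hp
    have := (Set.ext_iff.1 (gammaNeg_eq h hc hζ hξ) p).2 hp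
    exact ⟨this.1.1, this.1.2⟩
  have reflY_N : ∀ p : E3, p ∈ GammaNeg m ζ ξ → reflY p ∈ GammaNeg m ζ ξ := by
    intro p hp
    obtain ⟨hle, x, y, hw, hpeq⟩ := hp
    refine ⟨by rw [norm_reflY]; exact hle, x, -y, wedge_neg hw, ?_⟩
    rw [toE3 hpeq, reflY_vec]
  apply Set.Subset.antisymm
  · rintro p ⟨hp, hn⟩
    rcases le_total 0 (p 1) with hy | hy
    · exact Or.inl (key p hp hn hy)
    · right
      refine ⟨reflY p, key (reflY p) (reflY_N p hp) (by rw [norm_reflY]; exact hn) ?_,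
        reflY_reflY p⟩
      show (0:ℝ) ≤ -(p 1)
      linarith
  · rintro p (hp | ⟨q, hq, rfl⟩)
    · exact mem_back p hp
    · obtain ⟨hq1, hq2⟩ := mem_back q hq
      exact ⟨reflY_N q hq1, by show ‖reflY q‖ = 1; rw [norm_reflY]; exact hq2⟩

end Sym

-- ===== endpoints and rotations =====

section Endp

variable {Ψ : ℝ → ℝ} {m : ℕ} {c ζ ξ : ℝ}

lemma RotK_one_vec (hm : (1000:ℝ) ≤ m) (ρ z : ℝ) :
    RotK m 1 (WithLp.toLp 2 ![ρ * Real.cos (Real.pi/(2*m)), -(ρ * Real.sin (Real.pi/(2*m))), z])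
      = WithLp.toLp 2 ![ρ * Real.cos (Real.pi/(2*m)), ρ * Real.sin (Real.pi/(2*m)), -z] := by
  have hm0 : (0:ℝ) < m := by linarith
  have hangle : ((1:ℤ):ℝ) * Real.pi / m = Real.pi/(2*m) + Real.pi/(2*m) := by
    push_cast
    field_simp
    ring
  have hpyth := Real.sin_sq_add_cos_sq (Real.pi/(2*m))
  unfold RotK
  simp only [WithLp.ofLp_toLp, Matrix.cons_val_zero, Matrix.cons_val_one, Matrix.head_cons,
    Matrix.cons_val_two, Matrix.tail_cons]
  rw [hangle, Real.cos_add, Real.sin_add, vec3_eq_iff]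
  refine ⟨by linear_combination (ρ * Real.cos (Real.pi/(2*m))) * hpyth,
    by linear_combination (ρ * Real.sin (Real.pi/(2*m))) * hpyth, ?_⟩
  rw [zpow_one]
  ring

-- the three endpoints
lemma E1_mem (h : mOK m c) (hc : 0 < c) (hζ : |ζ| ≤ c) (hξ : |ξ| ≤ c)
    (hΨ0 : ∀ x : ℝ, x ≤ -1 → Ψ x = 0) (hΨr : ∀ x, Ψ x ∈ Set.Icc (0:ℝ) 1) :
    Pmap (f0 Ψ m ζ ξ) (rmaxOf m 0) ∈ Tpos0 Ψ m ζ ξ ∧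
    Pmap (f0 Ψ m ζ ξ) (rmaxOf m 0) =
      ![Real.sqrt (1-(0:ℝ)^2) * Real.cos (Real.pi/(2*m)),
        Real.sqrt (1-(0:ℝ)^2) * Real.sin (Real.pi/(2*m)), 0] := by
  obtain ⟨hm, hH, ht0, hth, hb0, hf0, hl0⟩ := inst_f0 h hc hζ hξ hΨ0 hΨr
  have h0H : (0:ℝ)^2 ≤ (3*(tauOf m ζ * m))^2 := by
    have : (0:ℝ)^2 = 0 := by norm_num
    rw [this]
    positivity
  constructor
  · exact arc_mem hm hH ht0 hth hb0 hf0 hl0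
      ⟨le_trans hth (rmax_ge hm hH h0H), le_rfl⟩
  · exact arc_endpoint hm hH ht0 hth hb0 hf0

lemma E2_mem (h : mOK m c) (hc : 0 < c) (hζ : |ζ| ≤ c) (hξ : |ξ| ≤ c)
    (hΨ0 : ∀ x : ℝ, x ≤ -1 → Ψ x = 0) (hΨ1 : ∀ x : ℝ, 1 ≤ x → Ψ x = 1)
    (hΨr : ∀ x, Ψ x ∈ Set.Icc (0:ℝ) 1) :
    Pmap (f1 Ψ m ζ ξ) (rmaxOf m (hhOf m ζ ξ)) ∈ Tpos1 Ψ m ζ ξ ∧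
    Pmap (f1 Ψ m ζ ξ) (rmaxOf m (hhOf m ζ ξ)) =
      ![Real.sqrt (1-(hhOf m ζ ξ)^2) * Real.cos (Real.pi/(2*m)),
        Real.sqrt (1-(hhOf m ζ ξ)^2) * Real.sin (Real.pi/(2*m)), hhOf m ζ ξ] := by
  obtain ⟨hm, hH, ht0, hth, _, _, _⟩ := inst_f0 h hc hζ hξ hΨ0 hΨr
  obtain ⟨hb1, hf1, hl1⟩ := inst_f1 h hc hζ hξ hΨ0 hΨ1 hΨr
  have hhH : (hhOf m ζ ξ)^2 ≤ (3*(tauOf m ζ * m))^2 := by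
    have h2 := pow_le_pow_left₀ (abs_nonneg (hhOf m ζ ξ)) ((h.hh_le_H hc hζ hξ).1) 2
    rwa [sq_abs] at h2
  constructor
  · exact arc_mem hm hH ht0 hth hb1 hf1 hl1
      ⟨le_trans hth (rmax_ge hm hH hhH), le_rfl⟩
  · exact arc_endpoint hm hH ht0 hth hb1 hf1

lemma E3_mem (h : mOK m c) (hc : 0 < c) (hζ : |ζ| ≤ c) (hξ : |ξ| ≤ c) :
    Pmap (fun _ => -(hhOf m ζ ξ)) (rmaxOf m (-(hhOf m ζ ξ))) ∈ TnegS m ζ ξ ∧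
    Pmap (fun _ => -(hhOf m ζ ξ)) (rmaxOf m (-(hhOf m ζ ξ))) =
      ![Real.sqrt (1-(-(hhOf m ζ ξ))^2) * Real.cos (Real.pi/(2*m)),
        Real.sqrt (1-(-(hhOf m ζ ξ))^2) * Real.sin (Real.pi/(2*m)), -(hhOf m ζ ξ)] := by
  obtain ⟨h0, hhalf, hlow⟩ := rneg_facts h hc hζ hξ
  have hm := h.m_ge hc
  have hH := h.H_inst hc hζ
  have hb : ∀ r, rnegOf m ζ ξ ≤ r → r ≤ 2 → |(fun _ : ℝ => -(hhOf m ζ ξ)) r| ≤ 3*(tauOf m ζ * m) :=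
    fun r h1 h2 => (h.hh_le_H hc hζ hξ).2
  have hf : ∀ r, 1/(2*(m:ℝ)) ≤ r → r ≤ 2 → (fun _ : ℝ => -(hhOf m ζ ξ)) r = -(hhOf m ζ ξ) :=
    fun r h1 h2 => rfl
  have hhH : (-(hhOf m ζ ξ))^2 ≤ (3*(tauOf m ζ * m))^2 := by
    have h2 := pow_le_pow_left₀ (abs_nonneg (hhOf m ζ ξ)) ((h.hh_le_H hc hζ hξ).1) 2
    rw [sq_abs] at h2
    rwa [neg_sq]
  constructor
  · exact arc_mem hm hH h0 hhalf hb hf hlow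
      ⟨le_trans hhalf (rmax_ge hm hH hhH), le_rfl⟩
  · exact arc_endpoint hm hH h0 hhalf hb hf

lemma sqrt_neg_sq (a : ℝ) : Real.sqrt (1-(-a)^2) = Real.sqrt (1-a^2) := by rw [neg_sq]

end Endp

-- ===== the chain of connected pieces =====

section Chain

variable {Ψ : ℝ → ℝ} {m : ℕ} {c ζ ξ : ℝ}

lemma nset_preconn (h : mOK m c) (hc : 0 < c) (hζ : |ζ| ≤ c) (hξ : |ξ| ≤ c) :
    IsPreconnected (NsetS m ζ ξ) := by
  obtain ⟨h0, hhalf, hlow⟩ := rneg_facts h hc hζ hξ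
  have hm := h.m_ge hc
  have hH := h.H_inst hc hζ
  have hhH : (-(hhOf m ζ ξ))^2 ≤ (3*(tauOf m ζ * m))^2 := by
    have h2 := pow_le_pow_left₀ (abs_nonneg (hhOf m ζ ξ)) ((h.hh_le_H hc hζ hξ).1) 2
    rw [sq_abs] at h2
    rwa [neg_sq]
  have hPneg : Pmap (fun _ => -(hhOf m ζ ξ)) (rnegOf m ζ ξ) ∈ TnegS m ζ ξ :=
    arc_mem hm hH h0 hhalf (fun r h1 h2 => (h.hh_le_H hc hζ hξ).2)
      (fun r h1 h2 => rfl) hlow ⟨le_rfl, le_trans hhalf (rmax_ge hm hH hhH)⟩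
  have hfix : reflY (Pmap (fun _ => -(hhOf m ζ ξ)) (rnegOf m ζ ξ))
      = Pmap (fun _ => -(hhOf m ζ ξ)) (rnegOf m ζ ξ) := by
    rw [toE3 (Pneg_eq h hc hζ hξ), reflY_vec, vec3_eq_iff]
    exact ⟨rfl, neg_zero, rfl⟩
  have hpre := tneg_preconn h hc hζ hξ
  exact IsPreconnected.union (Pmap (fun _ => -(hhOf m ζ ξ)) (rnegOf m ζ ξ)) hPneg
    ⟨_, hPneg, hfix⟩ hpre (hpre.image reflY continuous_reflY.continuousOn)

lemma d0_preconn (h : mOK m c) (hc : 0 < c) (hζ : |ζ| ≤ c) (hξ : |ξ| ≤ c)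
    (hΨ0 : ∀ x : ℝ, x ≤ -1 → Ψ x = 0) (hΨ1 : ∀ x : ℝ, 1 ≤ x → Ψ x = 1)
    (hΨr : ∀ x, Ψ x ∈ Set.Icc (0:ℝ) 1) (hΨc : Continuous Ψ) :
    IsPreconnected (D0S Ψ m ζ ξ) := by
  have hm := h.m_ge hc
  obtain ⟨hE1T, hE1eq⟩ := E1_mem h hc hζ hξ hΨ0 hΨr
  obtain ⟨hE2T, hE2eq⟩ := E2_mem h hc hζ hξ hΨ0 hΨ1 hΨr
  obtain ⟨hE3T, hE3eq⟩ := E3_mem h hc hζ hξ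
  have hCpre := cpos_preconn h hc hζ hξ hΨ0 hΨ1 hΨr hΨc
  have hNpre := nset_preconn h hc hζ hξ
  have hMpre : IsPreconnected (RotK m 1 '' CnegS Ψ m ζ ξ) := by
    apply IsPreconnected.image _ _ (continuous_RotK m 1).continuousOn
    exact hCpre.image reflY continuous_reflY.continuousOn
  -- E3 joins Nset and M
  have hE3M : Pmap (fun _ => -(hhOf m ζ ξ)) (rmaxOf m (-(hhOf m ζ ξ)))
      ∈ RotK m 1 '' CnegS Ψ m ζ ξ := by
    refine ⟨reflY (Pmap (f1 Ψ m ζ ξ) (rmaxOf m (hhOf m ζ ξ))),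
      ⟨_, Or.inr hE2T, rfl⟩, ?_⟩
    rw [toE3 hE2eq, reflY_vec, RotK_one_vec hm, toE3 hE3eq, sqrt_neg_sq]
  -- E1 joins M and Cpos
  have hE1M : Pmap (f0 Ψ m ζ ξ) (rmaxOf m 0) ∈ RotK m 1 '' CnegS Ψ m ζ ξ := by
    refine ⟨reflY (Pmap (f0 Ψ m ζ ξ) (rmaxOf m 0)),
      ⟨_, Or.inl hE1T, rfl⟩, ?_⟩
    rw [toE3 hE1eq, reflY_vec, RotK_one_vec hm, neg_zero]
  have hNM : IsPreconnected (NsetS m ζ ξ ∪ RotK m 1 '' CnegS Ψ m ζ ξ) :=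
    IsPreconnected.union _ (Or.inl hE3T) hE3M hNpre hMpre
  exact IsPreconnected.union _ (Or.inr hE1M) (Or.inl hE1T) hNM hCpre

lemma w_chain (h : mOK m c) (hc : 0 < c) (hζ : |ζ| ≤ c) (hξ : |ξ| ≤ c)
    (hΨ0 : ∀ x : ℝ, x ≤ -1 → Ψ x = 0) (hΨ1 : ∀ x : ℝ, 1 ≤ x → Ψ x = 1)
    (hΨr : ∀ x, Ψ x ∈ Set.Icc (0:ℝ) 1) (k : ℤ) :
    (WS Ψ m ζ ξ k ∩ WS Ψ m ζ ξ (k+1)).Nonempty := by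
  have hm := h.m_ge hc
  obtain ⟨hE2T, hE2eq⟩ := E2_mem h hc hζ hξ hΨ0 hΨ1 hΨr
  obtain ⟨hE3T, hE3eq⟩ := E3_mem h hc hζ hξ
  refine ⟨RotK m k (Pmap (f1 Ψ m ζ ξ) (rmaxOf m (hhOf m ζ ξ))), ?_, ?_⟩
  · exact ⟨_, Or.inr (Or.inr hE2T), rfl⟩
  · refine ⟨reflY (Pmap (fun _ => -(hhOf m ζ ξ)) (rmaxOf m (-(hhOf m ζ ξ)))),
      Or.inl (Or.inl (Or.inr ⟨_, hE3T, rfl⟩)), ?_⟩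
    have hid : RotK m 1 (reflY (Pmap (fun _ => -(hhOf m ζ ξ)) (rmaxOf m (-(hhOf m ζ ξ)))))
        = Pmap (f1 Ψ m ζ ξ) (rmaxOf m (hhOf m ζ ξ)) := by
      rw [toE3 hE3eq, reflY_vec, RotK_one_vec hm, toE3 hE2eq, sqrt_neg_sq, neg_neg]
    have hcomp := congrFun (RotK_comp m k 1)
      (reflY (Pmap (fun _ => -(hhOf m ζ ξ)) (rmaxOf m (-(hhOf m ζ ξ)))))
    simp only [Function.comp_apply] at hcomp
    rw [hid] at hcomp
    exact hcomp.symm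

lemma d0_sphere (h : mOK m c) (hc : 0 < c) (hζ : |ζ| ≤ c) (hξ : |ξ| ≤ c) :
    ∀ d ∈ D0S Ψ m ζ ξ, ‖d‖ = 1 := by
  have tnorm : ∀ q ∈ TnegS m ζ ξ, ‖q‖ = 1 := fun q hq => hq.2.1
  have cnorm : ∀ q ∈ CposS Ψ m ζ ξ, ‖q‖ = 1 := by
    rintro q (hq | hq)
    · exact hq.2.1
    · exact hq.2.1
  rintro d ((hd | hd) | hd)
  · rcases hd with hd | ⟨q, hq, rfl⟩
    · exact tnorm d hd
    · rw [norm_reflY]; exact tnorm q hq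
  · obtain ⟨q, ⟨e, he, rfl⟩, rfl⟩ := hd
    rw [norm_RotK, norm_reflY]
    exact cnorm e he
  · exact cnorm d hd

end Chain

-- ===== identification of the boundary with the chain union =====

section SEq

variable {Ψ : ℝ → ℝ} {m : ℕ} {c ζ ξ : ℝ}

lemma mem_union_of_piece (h : mOK m c) (hc : 0 < c) (hζ : |ζ| ≤ c) (hξ : |ξ| ≤ c)
    (k : ℤ) (b : E3) (hb : b ∈ Aset Ψ m ζ ξ) (hnb : ‖b‖ = 1) :
    RotK m k b ∈ ⋃ j : ℤ, WS Ψ m ζ ξ j := by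
  rcases hb with (hb | hb) | hb
  · -- GammaNeg
    have hbN : b ∈ NsetS m ζ ξ := by
      rw [← nset_cover h hc hζ hξ]
      exact ⟨hb, hnb⟩
    exact Set.mem_iUnion.2 ⟨k, ⟨b, Or.inl (Or.inl hbN), rfl⟩⟩
  all_goals {
    have hbC : b ∈ CposS Ψ m ζ ξ ∪ CnegS Ψ m ζ ξ := by
      rw [← cpos_cover h hc hζ hξ]
      first
      | exact ⟨Or.inl hb, hnb⟩
      | exact ⟨Or.inr hb, hnb⟩
    rcases hbC with hbC | hbC
    · exact Set.mem_iUnion.2 ⟨k, ⟨b, Or.inr hbC, rfl⟩⟩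
    · refine Set.mem_iUnion.2 ⟨k - 1, ⟨RotK m 1 b, Or.inl (Or.inr ⟨b, hbC, rfl⟩), ?_⟩⟩
      have hcomp := congrFun (RotK_comp m (k-1) 1) b
      simp only [Function.comp_apply] at hcomp
      rw [sub_add_cancel] at hcomp
      exact hcomp }

lemma S_eq (h : mOK m c) (hc : 0 < c) (hζ : |ζ| ≤ c) (hξ : |ξ| ≤ c)
    (hΨ0 : ∀ x : ℝ, x ≤ -1 → Ψ x = 0) (hΨ1 : ∀ x : ℝ, 1 ≤ x → Ψ x = 1)
    (hΨr : ∀ x, Ψ x ∈ Set.Icc (0:ℝ) 1) :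
    preInitialSurface Ψ m ζ ξ ∩ {p : E3 | ‖p‖ = 1} = ⋃ k : ℤ, WS Ψ m ζ ξ k := by
  apply Set.Subset.antisymm
  · rintro p ⟨hp, hn⟩
    simp only [preInitialSurface, Set.mem_iUnion] at hp
    obtain ⟨g, hg, a, ha, rfl⟩ := hp
    have hn' : ‖(g : E3 → E3) a‖ = 1 := hn
    have hna : ‖a‖ = 1 := by rw [symGroup_norm m g hg a] at hn'; exact hn'
    have haA : a ∈ Aset Ψ m ζ ξ := ha
    rcases symGroup_classify m g hg with ⟨k, hk⟩ | ⟨k, hk⟩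
    · have he : (g : E3 → E3) a = RotK m k a := by rw [hk]
      rw [he]
      exact mem_union_of_piece h hc hζ hξ k a haA hna
    · have he : (g : E3 → E3) a = RotK m k (reflY a) := by rw [hk]; rfl
      rw [he]
      exact mem_union_of_piece h hc hζ hξ k (reflY a) (reflY_Aset haA)
        (by rw [norm_reflY]; exact hna)
  · rintro p hp
    simp only [Set.mem_iUnion] at hp
    obtain ⟨k, d, hd, rfl⟩ := hp
    have hnd : ‖d‖ = 1 := d0_sphere h hc hζ hξ d hd
    refine ⟨?_, ?_⟩
    swap
    · show ‖RotK m k d‖ = 1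
      rw [norm_RotK]; exact hnd
    -- membership in preInitialSurface
    have cposA : ∀ q ∈ CposS Ψ m ζ ξ, q ∈ Aset Ψ m ζ ξ := by
      intro q hq
      have := (Set.ext_iff.1 (cpos_cover (Ψ := Ψ) h hc hζ hξ) q).2 (Or.inl hq)
      rcases this.1 with h0 | h1
      · exact Or.inl (Or.inr h0)
      · exact Or.inr h1
    rcases hd with (hd | hd) | hd
    · -- Nset : comes from GammaNeg
      have hA : d ∈ Aset Ψ m ζ ξ := by
        have := (Set.ext_iff.1 (nset_cover (m := m) h hc hζ hξ) d).2 hd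
        exact Or.inl (Or.inl this.1)
      obtain ⟨gk, hgk, hke⟩ := rotK_mem m k
      simp only [preInitialSurface, Set.mem_iUnion]
      exact ⟨gk, hgk, d, hA, by rw [hke]⟩
    · -- RotK 1 '' Cneg
      obtain ⟨q, ⟨e, he, rfl⟩, rfl⟩ := hd
      have hA : e ∈ Aset Ψ m ζ ξ := cposA e he
      obtain ⟨gk, hgk, hke⟩ := rotK_mem m (k+1)
      simp only [preInitialSurface, Set.mem_iUnion]
      refine ⟨gk * reflY, mul_mem hgk (reflY_mem m), e, hA, ?_⟩
      show (gk : E3 → E3) (reflY e) = _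
      rw [hke]
      have hcomp := congrFun (RotK_comp m k 1) (reflY e)
      simp only [Function.comp_apply] at hcomp
      exact hcomp.symm
    · -- Cpos
      have hA : d ∈ Aset Ψ m ζ ξ := cposA d hd
      obtain ⟨gk, hgk, hke⟩ := rotK_mem m k
      simp only [preInitialSurface, Set.mem_iUnion]
      exact ⟨gk, hgk, d, hA, by rw [hke]⟩

end SEq

-- ===== main theorem =====

/-- The connectedness-of-boundary assertion of Proposition 3.1: for any fixed smooth
nondecreasing cutoff `Ψ` (≡0 on `(−∞,−1]`, ≡1 on `[1,∞)`, with `Ψ − 1/2` odd) and any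
`c > 0`, for all sufficiently large `m` and all `ζ, ξ ∈ [−c, c]`, the boundary
`Σ̌[m,ζ,ξ] ∩ {‖p‖ = 1}` of the pre-initial surface is a connected subset of `ℝ³`. -/
theorem preInitialSurface_boundary_connected (Ψ : ℝ → ℝ)
    (hΨsmooth : ContDiff ℝ (⊤ : ℕ∞) Ψ) (hΨmono : Monotone Ψ)
    (hΨrange : ∀ x, Ψ x ∈ Set.Icc (0:ℝ) 1)
    (hΨ0 : ∀ x : ℝ, x ≤ -1 → Ψ x = 0) (hΨ1 : ∀ x : ℝ, 1 ≤ x → Ψ x = 1)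
    (hΨodd : ∀ x : ℝ, Ψ (-x) - 1 / 2 = -(Ψ x - 1 / 2)) :
    ∀ c : ℝ, 0 < c → ∃ m₀ : ℕ, 0 < m₀ ∧ ∀ m : ℕ, m₀ < m →
      ∀ ζ ξ : ℝ, ζ ∈ Set.Icc (-c) c → ξ ∈ Set.Icc (-c) c →
        IsConnected
          (preInitialSurface Ψ m ζ ξ ∩ {p : EuclideanSpace ℝ (Fin 3) | ‖p‖ = 1}) := by
  intro c hc
  refine ⟨⌈409600 * Real.exp c + 20*c + 1000⌉₊, ?_, ?_⟩
  · rw [Nat.ceil_pos]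
    have := Real.exp_pos c
    nlinarith
  intro m hm ζ ξ hζI hξI
  have hζ : |ζ| ≤ c := abs_le.2 ⟨hζI.1, hζI.2⟩
  have hξ : |ξ| ≤ c := abs_le.2 ⟨hξI.1, hξI.2⟩
  have hmok : mOK m c := by
    unfold mOK
    have h1 : (409600 * Real.exp c + 20*c + 1000 : ℝ)
        ≤ (⌈409600 * Real.exp c + 20*c + 1000⌉₊ : ℝ) := Nat.le_ceil _
    have h2 : ((⌈409600 * Real.exp c + 20*c + 1000⌉₊ : ℕ) : ℝ) ≤ (m : ℝ) := by
      exact_mod_cast Nat.le_of_lt hm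
    linarith
  have hΨc : Continuous Ψ := hΨsmooth.continuous
  rw [S_eq hmok hc hζ hξ hΨ0 hΨ1 hΨrange]
  constructor
  · -- nonempty
    obtain ⟨hE2T, _⟩ := E2_mem hmok hc hζ hξ hΨ0 hΨ1 hΨrange
    refine ⟨RotK m 0 (Pmap (f1 Ψ m ζ ξ) (rmaxOf m (hhOf m ζ ξ))), ?_⟩
    exact Set.mem_iUnion.2 ⟨0, ⟨_, Or.inr (Or.inr hE2T), rfl⟩⟩
  · apply IsPreconnected.iUnion_of_chain
    · intro k
      exact (d0_preconn hmok hc hζ hξ hΨ0 hΨ1 hΨrange hΨc).image _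
        (continuous_RotK m k).continuousOn
    · intro k
      have hsucc : Order.succ k = k + 1 := rfl
      rw [hsucc]
      exact w_chain hmok hc hζ hξ hΨ0 hΨ1 hΨrange k

end
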